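/- arXiv:2402.07612 — 8 statements merged into one kernel-verified Lean document; each statement's English description precedes it below -/
import Mathlib

section
/- Let Ω ⊆ ℂ be open and connected, F holomorphic on Ω with F ≢ 0, and a ∈ Ω with F(a) = 0 and Re F′(a) < 0. Then for every ε > 0 with the closed ball of radius ε around a contained in Ω, there exists δ ∈ (0, ε] such that: (1) every solution γ : [0,∞) → Ω of ẋ = F(x) with |γ(0) − a| < δ satisfies |γ(t) − a| < ε for all t ≥ 0 and γ(t) → a as t → ∞; and (2) for every x₀ with |x₀ − a| < δ there exists such a solution γ with γ(0) = x₀. (In particular a is asymptotically stable.) -/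
/-!
Let `c = F'(a)` and `μ = -Re c / 2 > 0`. Since `F z = c (z - a) + o(z - a)`, the real inner
product `⟪z - a, F z⟫` is at most `-μ ‖z - a‖²` on a small closed ball around `a`. Solutions
therefore cross the boundary sphere inwards, so the ball is forward invariant, and along a solution
in the ball `‖γ t - a‖² e^{2μt}` is non-increasing, which gives exponential convergence to `a`.
Solutions for all positive times are obtained by concatenating local Picard–Lindelöf solutions of a
fixed length, each starting in (and therefore remaining in) the ball.
-/

open Set Filter Topology Metric Real
open scoped InnerProductSpace Pointwise

/-- A solution of `ẋ = F(x)` on the set `s ⊆ ℝ`, staying in `Ω`. -/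
def IsSolOn (F : ℂ → ℂ) (Ω : Set ℂ) (s : Set ℝ) (γ : ℝ → ℂ) : Prop :=
  ∀ t ∈ s, γ t ∈ Ω ∧ HasDerivWithinAt γ (F (γ t)) s t

section IntegralCurve

variable {E : Type*} [NormedAddCommGroup E] [NormedSpace ℝ E] {γ : ℝ → E}

theorem IsIntegralCurveOn.hasDerivWithinAt_Ici {v : ℝ → E → E} {t₀ T t : ℝ}
    (hγ : IsIntegralCurveOn γ v (Icc t₀ T)) (ht : t ∈ Ico t₀ T) :
    HasDerivWithinAt γ (v t (γ t)) (Ici t) t :=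
  (hγ t (Ico_subset_Icc_self ht)).mono_of_mem_nhdsWithin
    (mem_of_superset (Icc_mem_nhdsGE ht.2) (Icc_subset_Icc_left ht.1))

theorem IsIntegralCurveOn.congr_of_eqOn {v : ℝ → E → E} {s : Set ℝ} {γ' : ℝ → E}
    (h : IsIntegralCurveOn γ v s) (heq : EqOn γ' γ s) : IsIntegralCurveOn γ' v s :=
  fun t ht ↦ heq ht ▸ (h t ht).congr_of_mem heq ht

theorem IsIntegralCurveOn.union_of_isClosed {v : ℝ → E → E} {s s' : Set ℝ}
    (h : IsIntegralCurveOn γ v s) (h' : IsIntegralCurveOn γ v s')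
    (hs : IsClosed s) (hs' : IsClosed s') : IsIntegralCurveOn γ v (s ∪ s') := by
  intro t _
  have within : ∀ {u : Set ℝ}, IsIntegralCurveOn γ v u → IsClosed u →
      HasDerivWithinAt γ (v t (γ t)) u t := fun {u} hγ hu ↦ by
    by_cases htu : t ∈ u
    · exact hγ t htu
    -- away from the closed set `u`, a derivative within `u` is vacuous
    · exact hasDerivWithinAt_iff_hasFDerivWithinAt.2 (.of_notMem_closure (by rwa [hu.closure_eq]))
  exact (within h hs).union (within h' hs')

theorem isIntegralCurveOn_Ici_of_forall_Icc {v : ℝ → E → E} {t₀ : ℝ}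
    (h : ∀ T, IsIntegralCurveOn γ v (Icc t₀ T)) : IsIntegralCurveOn γ v (Ici t₀) := fun t ht ↦
  (h (t + 1) t ⟨ht, by linarith⟩).mono_of_mem_nhdsWithin <| by
    rw [← Ici_inter_Iic]
    exact inter_mem_nhdsWithin _ (Iic_mem_nhds (by linarith))

theorem exists_isIntegralCurveOn_Ici_of_forall_mem {f : E → E} {S : Set E} {σ : ℝ} (hσ : 0 < σ)
    (hS : ∀ x ∈ S, ∃ α : ℝ → E, α 0 = x ∧ α σ ∈ S ∧ IsIntegralCurveOn α (fun _ ↦ f) (Icc 0 σ))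
    {x : E} (hx : x ∈ S) : ∃ γ : ℝ → E, γ 0 = x ∧ IsIntegralCurveOn γ (fun _ ↦ f) (Ici 0) := by
  choose! α hα₀ hασ hα using hS
  -- `p n` is the state at time `n * σ`.
  let p : ℕ → E := fun n ↦ Nat.rec x (fun _ y ↦ α y σ) n
  have hp : ∀ n, p n ∈ S := fun n ↦ by
    induction n with
    | zero => exact hx
    | succ n ih => exact hασ _ ih
  let γ : ℝ → E := fun t ↦ α (p ⌊t / σ⌋₊) (t - ⌊t / σ⌋₊ * σ)
  have hpiece : ∀ n : ℕ, EqOn γ (fun t ↦ α (p n) (t - n * σ)) (Icc (n * σ) (n * σ + σ)) := by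
    intro n t ht
    rcases ht.2.lt_or_eq with hlt | rfl
    · have hfloor : ⌊t / σ⌋₊ = n := by
        rw [Nat.floor_eq_iff (div_nonneg (le_trans (by positivity) ht.1) hσ.le),
          le_div_iff₀ hσ, div_lt_iff₀ hσ]
        exact ⟨ht.1, by linarith⟩
      simp only [γ, hfloor]
    · have hfloor : ⌊(n * σ + σ) / σ⌋₊ = n + 1 := by
        rw [← add_one_mul, mul_div_cancel_right₀ _ hσ.ne']
        exact_mod_cast Nat.floor_natCast (n + 1)
      simp only [γ, hfloor]
      push_cast
      rw [show (n : ℝ) * σ + σ - (n + 1) * σ = 0 by ring, add_sub_cancel_left, hα₀ _ (hp (n + 1))]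
  have hγn : ∀ n : ℕ, IsIntegralCurveOn γ (fun _ ↦ f) (Icc (n * σ) (n * σ + σ)) := by
    intro n
    have := (hα _ (hp n)).comp_sub (n * σ)
    rw [vadd_Icc, add_zero] at this
    exact this.congr_of_eqOn (hpiece n)
  have hγ : ∀ n : ℕ, IsIntegralCurveOn γ (fun _ ↦ f) (Icc 0 (n * σ + σ)) := by
    intro n
    induction n with
    | zero => simpa using hγn 0
    | succ n ih =>
      rw [show ((n + 1 : ℕ) : ℝ) * σ + σ = n * σ + σ + σ by push_cast; ring,
        ← Icc_union_Icc_eq_Icc (b := n * σ + σ) (by positivity) (by linarith)]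
      exact ih.union_of_isClosed (by simpa [add_one_mul] using hγn (n + 1))
        isClosed_Icc isClosed_Icc
  refine ⟨γ, by simpa [γ, p] using hα₀ x hx, isIntegralCurveOn_Ici_of_forall_Icc fun T ↦ ?_⟩
  obtain ⟨n, hn⟩ := exists_nat_ge (T / σ)
  refine (hγ n).mono (Icc_subset_Icc_right ?_)
  rw [div_le_iff₀ hσ] at hn
  linarith

end IntegralCurve

section Dissipative

variable {E : Type*} [NormedAddCommGroup E] [InnerProductSpace ℝ E]
  {f : E → E} {a : E} {μ r t₀ T : ℝ} {γ : ℝ → E}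

theorem eventually_inner_sub_le_of_hasFDerivAt {L : E →L[ℝ] E} (hμ : 0 < μ)
    (hf : HasFDerivAt f L a) (ha : f a = 0) (hL : ∀ w, ⟪w, L w⟫_ℝ ≤ -(2 * μ) * ‖w‖ ^ 2) :
    ∀ᶠ z in 𝓝 a, ⟪z - a, f z⟫_ℝ ≤ -μ * ‖z - a‖ ^ 2 := by
  filter_upwards [hf.isLittleO.def hμ] with z hz
  rw [ha, sub_zero] at hz
  have hsplit : ⟪z - a, f z⟫_ℝ = ⟪z - a, L (z - a)⟫_ℝ + ⟪z - a, f z - L (z - a)⟫_ℝ := by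
    rw [← inner_add_right, add_sub_cancel]
  have := real_inner_le_norm (z - a) (f z - L (z - a))
  nlinarith [hL (z - a), mul_le_mul_of_nonneg_left hz (norm_nonneg (z - a))]

theorem IsIntegralCurveOn.mapsTo_closedBall (hμ : 0 < μ) (hr : 0 < r)
    (hf : ∀ z ∈ closedBall a r, ⟪z - a, f z⟫_ℝ ≤ -μ * ‖z - a‖ ^ 2)
    (hγ : IsIntegralCurveOn γ (fun _ ↦ f) (Icc t₀ T)) (h₀ : γ t₀ ∈ closedBall a r) :
    MapsTo γ (Icc t₀ T) (closedBall a r) := by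
  have hsq : ∀ t ∈ Icc t₀ T, ‖γ t - a‖ ^ 2 ≤ r ^ 2 := by
    refine image_le_of_deriv_right_lt_deriv_boundary (B' := 0)
      ((hγ.continuousOn.sub continuousOn_const).norm.pow 2)
      (fun t ht ↦ ((hγ.hasDerivWithinAt_Ici ht).sub_const a).norm_sq) ?_
      (fun _ ↦ hasDerivAt_const _ _) fun t _ hrt ↦ ?_
    · simpa [← dist_eq_norm, sq_le_sq₀, dist_nonneg, hr.le] using h₀
    · have hrt' : ‖γ t - a‖ = r := by
        simpa [sq_eq_sq₀, norm_nonneg, hr.le] using hrt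
      have := hf (γ t) (by simp [dist_eq_norm, hrt'])
      rw [hrt'] at this
      simp only [Pi.zero_apply]
      nlinarith [mul_pos hμ (mul_pos hr hr)]
  intro t ht
  rw [mem_closedBall, dist_eq_norm]
  exact le_of_pow_le_pow_left₀ two_ne_zero hr.le (hsq t ht)

theorem IsIntegralCurveOn.norm_sub_le_mul_exp (hμ : 0 < μ) (hr : 0 < r)
    (hf : ∀ z ∈ closedBall a r, ⟪z - a, f z⟫_ℝ ≤ -μ * ‖z - a‖ ^ 2)
    (hγ : IsIntegralCurveOn γ (fun _ ↦ f) (Icc t₀ T)) (h₀ : γ t₀ ∈ closedBall a r) :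
    ∀ t ∈ Icc t₀ T, ‖γ t - a‖ ≤ ‖γ t₀ - a‖ * exp (-(μ * (t - t₀))) := by
  have hmaps := hγ.mapsTo_closedBall hμ hr hf h₀
  set W : ℝ → ℝ := fun t ↦ ‖γ t - a‖ ^ 2 * exp (2 * μ * (t - t₀))
  have hW : ∀ t ∈ Icc t₀ T, W t ≤ W t₀ := by
    refine image_le_of_deriv_right_le_deriv_boundary (B' := 0)
      (f' := fun t ↦ (2 * ⟪γ t - a, f (γ t)⟫_ℝ + 2 * μ * ‖γ t - a‖ ^ 2) * exp (2 * μ * (t - t₀)))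
      (((hγ.continuousOn.sub continuousOn_const).norm.pow 2).mul (by fun_prop)) (fun t ht ↦ ?_)
      le_rfl continuousOn_const (fun _ _ ↦ hasDerivWithinAt_const _ _ _) fun t ht ↦ ?_
    · have hexp : HasDerivAt (fun t ↦ exp (2 * μ * (t - t₀)))
          (exp (2 * μ * (t - t₀)) * (2 * μ)) t := by
        simpa using ((hasDerivAt_id t).sub_const t₀ |>.const_mul (2 * μ)).exp
      exact ((((hγ.hasDerivWithinAt_Ici ht).sub_const a).norm_sq).mul
        hexp.hasDerivWithinAt).congr_deriv (by ring)
    · have := hf _ (hmaps (Ico_subset_Icc_self ht))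
      simp only [Pi.zero_apply]
      nlinarith [exp_pos (2 * μ * (t - t₀))]
  intro t ht
  have hsq : (‖γ t - a‖ * exp (μ * (t - t₀))) ^ 2 ≤ ‖γ t₀ - a‖ ^ 2 := by
    simpa [W, mul_pow, ← exp_nat_mul, ← mul_assoc] using hW t ht
  rw [exp_neg, ← div_eq_mul_inv, le_div_iff₀ (exp_pos _)]
  exact le_of_pow_le_pow_left₀ two_ne_zero (norm_nonneg _) hsq

theorem IsIntegralCurveOn.norm_sub_le (hμ : 0 < μ) (hr : 0 < r)
    (hf : ∀ z ∈ closedBall a r, ⟪z - a, f z⟫_ℝ ≤ -μ * ‖z - a‖ ^ 2)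
    (hγ : IsIntegralCurveOn γ (fun _ ↦ f) (Icc t₀ T)) (h₀ : γ t₀ ∈ closedBall a r) :
    ∀ t ∈ Icc t₀ T, ‖γ t - a‖ ≤ ‖γ t₀ - a‖ := fun t ht ↦
  (hγ.norm_sub_le_mul_exp hμ hr hf h₀ t ht).trans <| mul_le_of_le_one_right (norm_nonneg _) <|
    exp_le_one_iff.2 (by nlinarith [ht.1])

theorem IsIntegralCurveOn.tendsto_atTop (hμ : 0 < μ) (hr : 0 < r)
    (hf : ∀ z ∈ closedBall a r, ⟪z - a, f z⟫_ℝ ≤ -μ * ‖z - a‖ ^ 2)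
    (hγ : IsIntegralCurveOn γ (fun _ ↦ f) (Ici t₀)) (h₀ : γ t₀ ∈ closedBall a r) :
    Tendsto γ atTop (𝓝 a) := by
  have hexp : Tendsto (fun t ↦ -(μ * (t - t₀))) atTop atBot := by
    simpa only [sub_eq_add_neg, Function.comp_def, id] using tendsto_neg_atTop_atBot.comp
      ((tendsto_atTop_add_const_right _ (-t₀) tendsto_id).const_mul_atTop hμ)
  have hdecay : Tendsto (fun t ↦ ‖γ t₀ - a‖ * exp (-(μ * (t - t₀)))) atTop (𝓝 0) := by
    simpa using (tendsto_exp_atBot.comp hexp).const_mul ‖γ t₀ - a‖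
  rw [tendsto_iff_norm_sub_tendsto_zero]
  refine squeeze_zero' (.of_forall fun _ ↦ norm_nonneg _) ?_ hdecay
  filter_upwards [eventually_ge_atTop t₀] with t ht
  exact (hγ.mono Icc_subset_Ici_self).norm_sub_le_mul_exp hμ hr hf h₀ t ⟨ht, le_rfl⟩

theorem exists_forall_mem_closedBall_exists_isIntegralCurveOn_Ici [CompleteSpace E]
    (hf₁ : ContDiffAt ℝ 1 f a) (hμ : 0 < μ) (hr : 0 < r)
    (hf : ∀ z ∈ closedBall a r, ⟪z - a, f z⟫_ℝ ≤ -μ * ‖z - a‖ ^ 2) :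
    ∃ δ > 0, δ ≤ r ∧ ∀ x ∈ closedBall a δ,
      ∃ γ : ℝ → E, γ 0 = x ∧ IsIntegralCurveOn γ (fun _ ↦ f) (Ici 0) := by
  obtain ⟨ρ, hρ, η, hη, hloc⟩ :=
    hf₁.exists_forall_mem_closedBall_exists_eq_forall_mem_Ioo_hasDerivAt 0
  have hδ : 0 < min r ρ := lt_min hr hρ
  have hfδ : ∀ z ∈ closedBall a (min r ρ), ⟪z - a, f z⟫_ℝ ≤ -μ * ‖z - a‖ ^ 2 := fun z hz ↦
    hf z (closedBall_subset_closedBall (min_le_left _ _) hz)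
  refine ⟨min r ρ, hδ, min_le_left _ _, fun x hx ↦
    exists_isIntegralCurveOn_Ici_of_forall_mem (half_pos hη) (fun y hy ↦ ?_) hx⟩
  obtain ⟨α, hα₀, hα⟩ := hloc y (closedBall_subset_closedBall (min_le_right _ _) hy)
  have hαI : IsIntegralCurveOn α (fun _ ↦ f) (Icc 0 (η / 2)) := fun t ht ↦
    (hα t ⟨by linarith [ht.1], by linarith [ht.2]⟩).hasDerivWithinAt
  refine ⟨α, hα₀, ?_, hαI⟩
  have hend := hαI.norm_sub_le hμ hδ hfδ (hα₀ ▸ hy) (η / 2) ⟨by positivity, le_rfl⟩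
  rw [hα₀] at hend
  exact mem_closedBall_iff_norm.2 (hend.trans (mem_closedBall_iff_norm.1 hy))

end Dissipative

theorem Complex.real_inner_self_mul (c w : ℂ) : ⟪w, w * c⟫_ℝ = c.re * ‖w‖ ^ 2 := by
  rw [Complex.inner, mul_right_comm, Complex.mul_conj, Complex.re_ofReal_mul,
    Complex.normSq_eq_norm_sq, mul_comm]

theorem HasDerivAt.eventually_inner_sub_le {F : ℂ → ℂ} {a c : ℂ} {μ : ℝ} (hF : HasDerivAt F c a)
    (ha : F a = 0) (hμ : 0 < μ) (hc : c.re ≤ -(2 * μ)) :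
    ∀ᶠ z in 𝓝 a, ⟪z - a, F z⟫_ℝ ≤ -μ * ‖z - a‖ ^ 2 :=
  eventually_inner_sub_le_of_hasFDerivAt hμ (hF.hasFDerivAt.restrictScalars ℝ) ha fun w ↦ by
    change ⟪w, w * c⟫_ℝ ≤ _
    rw [Complex.real_inner_self_mul]
    exact mul_le_mul_of_nonneg_right hc (sq_nonneg _)

theorem isSolOn_iff {F : ℂ → ℂ} {Ω : Set ℂ} {s : Set ℝ} {γ : ℝ → ℂ} :
    IsSolOn F Ω s γ ↔ MapsTo γ s Ω ∧ IsIntegralCurveOn γ (fun _ ↦ F) s :=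
  forall₂_and

theorem stmt_1_general (Ω : Set ℂ) (hΩ : IsOpen Ω)
    (F : ℂ → ℂ) (hF : DifferentiableOn ℂ F Ω)
    (a : ℂ) (ha : a ∈ Ω) (hFa : F a = 0) (hre : (deriv F a).re < 0) :
    ∀ ε > 0, Metric.closedBall a ε ⊆ Ω →
      ∃ δ, 0 < δ ∧ δ ≤ ε ∧
        (∀ γ : ℝ → ℂ, IsSolOn F Ω (Ici 0) γ → dist (γ 0) a < δ →
          (∀ t ∈ Ici (0 : ℝ), dist (γ t) a < ε) ∧ Tendsto γ atTop (nhds a)) ∧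
        (∀ x₀ : ℂ, dist x₀ a < δ →
          ∃ γ : ℝ → ℂ, IsSolOn F Ω (Ici 0) γ ∧ γ 0 = x₀) := by
  intro ε hε hball
  set μ := -(deriv F a).re / 2
  have hμ : 0 < μ := by simp only [μ]; linarith
  have hFa' : HasDerivAt F (deriv F a) a := (hF.differentiableAt (hΩ.mem_nhds ha)).hasDerivAt
  obtain ⟨r, hr, hdiss⟩ := nhds_basis_closedBall.mem_iff.1
    (hFa'.eventually_inner_sub_le hFa hμ (by simp only [μ]; linarith))
  have hC1 : ContDiffAt ℝ 1 F a :=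
    ((hF.contDiffOn hΩ).contDiffAt (hΩ.mem_nhds ha)).restrict_scalars ℝ
  obtain ⟨δ, hδ, hδr, hexists⟩ := exists_forall_mem_closedBall_exists_isIntegralCurveOn_Ici hC1 hμ
    (lt_min hr hε) fun z hz ↦ hdiss (closedBall_subset_closedBall (min_le_left _ _) hz)
  have hδε : δ ≤ ε := hδr.trans (min_le_right _ _)
  have hδdiss : ∀ z ∈ closedBall a δ, ⟪z - a, F z⟫_ℝ ≤ -μ * ‖z - a‖ ^ 2 := fun z hz ↦
    hdiss (closedBall_subset_closedBall (hδr.trans (min_le_left _ _)) hz)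
  have hstay : ∀ γ : ℝ → ℂ, IsIntegralCurveOn γ (fun _ ↦ F) (Ici 0) → γ 0 ∈ closedBall a δ →
      ∀ t ∈ Ici (0 : ℝ), dist (γ t) a ≤ dist (γ 0) a := fun γ hγ h₀ t ht ↦ by
    simpa only [dist_eq_norm] using
      (hγ.mono Icc_subset_Ici_self).norm_sub_le hμ hδ hδdiss h₀ t ⟨ht, le_rfl⟩
  refine ⟨δ, hδ, hδε, fun γ hγ hγ₀ ↦ ?_, fun x₀ hx₀ ↦ ?_⟩
  · have hγ' := (isSolOn_iff.1 hγ).2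
    have h₀ : γ 0 ∈ closedBall a δ := ball_subset_closedBall hγ₀
    exact ⟨fun t ht ↦ ((hstay γ hγ' h₀ t ht).trans_lt hγ₀).trans_le hδε,
      hγ'.tendsto_atTop hμ hδ hδdiss h₀⟩
  · obtain ⟨γ, hγ₀, hγ⟩ := hexists x₀ (ball_subset_closedBall hx₀)
    have h₀ : γ 0 ∈ closedBall a δ := hγ₀ ▸ ball_subset_closedBall hx₀
    refine ⟨γ, isSolOn_iff.2 ⟨fun t ht ↦ hball ?_, hγ⟩, hγ₀⟩
    exact (hstay γ hγ h₀ t ht).trans ((mem_closedBall.1 h₀).trans hδε)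

/-- If `F` is holomorphic on the open connected `Ω`, `F ≢ 0`, `F a = 0` and
`Re F'(a) < 0`, then for every `ε > 0` with `closedBall a ε ⊆ Ω` there is `δ ∈ (0, ε]` such
that every solution `γ : [0,∞) → Ω` starting `δ`-close to `a` stays `ε`-close to `a` and
tends to `a`, and through every point `δ`-close to `a` such a solution exists. -/
theorem stmt_1 (Ω : Set ℂ) (hΩ : IsOpen Ω) (hconn : IsConnected Ω)
    (F : ℂ → ℂ) (hF : DifferentiableOn ℂ F Ω) (hF0 : ∃ z ∈ Ω, F z ≠ 0)
    (a : ℂ) (ha : a ∈ Ω) (hFa : F a = 0) (hre : (deriv F a).re < 0) :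
    ∀ ε > 0, Metric.closedBall a ε ⊆ Ω →
      ∃ δ, 0 < δ ∧ δ ≤ ε ∧
        (∀ γ : ℝ → ℂ, IsSolOn F Ω (Ici 0) γ → dist (γ 0) a < δ →
          (∀ t ∈ Ici (0 : ℝ), dist (γ t) a < ε) ∧ Tendsto γ atTop (nhds a)) ∧
        (∀ x₀ : ℂ, dist x₀ a < δ →
          ∃ γ : ℝ → ℂ, IsSolOn F Ω (Ici 0) γ ∧ γ 0 = x₀) :=
  stmt_1_general Ω hΩ F hF a ha hFa hre
end

section
/- Let Ω ⊆ ℂ be open and connected, F holomorphic on Ω with F ≢ 0, and a ∈ Ω an equilibrium with F′(a) real and negative (i.e. Re F′(a) < 0 and Im F′(a) = 0). Then there exists δ > 0 such that every solution γ : [0,∞) → Ω of ẋ = F(x) with 0 < |γ(0) − a| < δ satisfies γ(t) → a as t → ∞, γ(t) ≠ a for all t, and there exists θ₀ ∈ [0, 2π) with (γ(t) − a)/|γ(t) − a| → e^{iθ₀} as t → ∞; that is, a is a stable node and each nearby orbit tends to a in a definite direction. -/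
open Set Filter Topology

/-! Writing `F z = (z - a) * g z` with `g = dslope F a`, which is holomorphic with
`g a = F'(a) = μ < 0`, the displacement `w = γ - a` solves the linear equation `w' = k(t) w`
with `k = g ∘ γ`, so `w t = w 0 * exp (∫₀ᵗ k)`. Near `a` we have `Re g < μ / 2`, and
`|Im g z| ≤ C |z - a|` because `g a` is real. A barrier argument for `Re ∫₀ᵗ k ≤ (μ / 2) t`
keeps the orbit in that neighbourhood and gives exponential decay of `|w|`; then `Im k` is
integrable on `(0, ∞)`, so the argument `Im ∫₀ᵗ k` converges and with it the direction `w / |w|`. -/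

open MeasureTheory intervalIntegral
open scoped Complex Real

theorem hasDerivWithinAt_integral_Ici_of_continuousOn {k : ℝ → ℂ} (hk : ContinuousOn k (Ici 0))
    {t : ℝ} (ht : 0 ≤ t) :
    HasDerivWithinAt (fun u => ∫ s in (0 : ℝ)..u, k s) (k t) (Ici 0) t := by
  have hint : IntervalIntegrable k volume 0 t :=
    (hk.mono Icc_subset_Ici_self).intervalIntegrable_of_Icc ht
  rcases ht.eq_or_lt with rfl | hpos
  · exact integral_hasDerivWithinAt_right hint
      ((hk.mono Ioi_subset_Ici_self).stronglyMeasurableAtFilter_nhdsWithin measurableSet_Ioi 0)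
      ((hk 0 self_mem_Ici).mono Ioi_subset_Ici_self)
  · exact (integral_hasDerivAt_right hint
      ((hk.mono Ioi_subset_Ici_self).stronglyMeasurableAtFilter isOpen_Ioi t hpos)
      (hk.continuousAt (Ici_mem_nhds hpos))).hasDerivWithinAt

section LinearEquation

variable {w k : ℝ → ℂ}

theorem eq_mul_cexp_integral_of_hasDerivWithinAt (hk : ContinuousOn k (Ici 0))
    (hw : ∀ t ∈ Ici (0 : ℝ), HasDerivWithinAt w (w t * k t) (Ici 0) t) {t : ℝ} (ht : 0 ≤ t) :
    w t = w 0 * cexp (∫ s in (0 : ℝ)..t, k s) := by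
  set K : ℝ → ℂ := fun u => ∫ s in (0 : ℝ)..u, k s
  have hK (u : ℝ) (hu : 0 ≤ u) : HasDerivWithinAt K (k u) (Ici 0) u :=
    hasDerivWithinAt_integral_Ici_of_continuousOn hk hu
  have hφ (u : ℝ) (hu : 0 ≤ u) :
      HasDerivWithinAt (fun u => w u * cexp (-K u)) 0 (Ici 0) u :=
    ((hw u hu).mul (hK u hu).neg.cexp).congr_deriv (by simp only [Pi.neg_apply]; ring)
  have hconst := constant_of_has_deriv_right_zero
    (fun u hu => (hφ u hu.1).continuousWithinAt.mono Icc_subset_Ici_self)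
    (fun u hu => (hφ u hu.1).mono (Ici_subset_Ici.2 hu.1)) t ⟨ht, le_rfl⟩
  have hK0 : K 0 = 0 := integral_same
  simp only [hK0, neg_zero, Complex.exp_zero, mul_one] at hconst
  rw [← hconst, mul_assoc, ← Complex.exp_add, neg_add_cancel, Complex.exp_zero, mul_one]

theorem norm_le_mul_exp_of_re_lt (hk : ContinuousOn k (Ici 0))
    (hw : ∀ t ∈ Ici (0 : ℝ), HasDerivWithinAt w (w t * k t) (Ici 0) t) {c δ : ℝ} (hc : c ≤ 0)
    (hδ : ‖w 0‖ < δ) (hre : ∀ t ∈ Ici (0 : ℝ), ‖w t‖ < δ → (k t).re < c) {t : ℝ} (ht : 0 ≤ t) :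
    ‖w t‖ ≤ ‖w 0‖ * rexp (c * t) := by
  set ρ : ℝ → ℝ := fun u => (∫ s in (0 : ℝ)..u, k s).re
  have hρ (u : ℝ) (hu : 0 ≤ u) : HasDerivWithinAt ρ (k u).re (Ici 0) u :=
    Complex.reCLM.hasFDerivAt.comp_hasDerivWithinAt u
      (hasDerivWithinAt_integral_Ici_of_continuousOn hk hu)
  have hnorm (u : ℝ) (hu : 0 ≤ u) : ‖w u‖ = ‖w 0‖ * rexp (ρ u) := by
    rw [eq_mul_cexp_integral_of_hasDerivWithinAt hk hw hu, norm_mul, Complex.norm_exp]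
  have hρle : ρ t ≤ c * t := by
    refine image_le_of_deriv_right_lt_deriv_boundary'
      (fun u hu => (hρ u hu.1).continuousWithinAt.mono Icc_subset_Ici_self)
      (fun u hu => (hρ u hu.1).mono (Ici_subset_Ici.2 hu.1))
      (by simp [ρ]) (continuous_const_mul c).continuousOn
      (fun u _ => (hasDerivWithinAt_id u _).const_mul c |>.congr_deriv (mul_one c))
      (fun u hu hρu => hre u hu.1 ?_) ⟨ht, le_rfl⟩
    rw [hnorm u hu.1, hρu]
    exact (mul_le_of_le_one_right (norm_nonneg _)
      (Real.exp_le_one_iff.2 (mul_nonpos_of_nonpos_of_nonneg hc hu.1))).trans_lt hδ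
  rw [hnorm t ht]
  gcongr

theorem exists_tendsto_div_norm_of_integrableOn_im (hk : ContinuousOn k (Ici 0))
    (hw : ∀ t ∈ Ici (0 : ℝ), HasDerivWithinAt w (w t * k t) (Ici 0) t) (hw0 : w 0 ≠ 0)
    (him : IntegrableOn (fun s => (k s).im) (Ioi 0)) :
    ∃ u : ℂ, ‖u‖ = 1 ∧ Tendsto (fun t => w t / (‖w t‖ : ℂ)) atTop (𝓝 u) := by
  set K : ℝ → ℂ := fun t => ∫ s in (0 : ℝ)..t, k s
  have hK : Tendsto (fun t => (K t).im) atTop (𝓝 (∫ s in Ioi 0, (k s).im)) :=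
    (intervalIntegral_tendsto_integral_Ioi 0 him tendsto_id).congr'
      (eventually_ge_atTop 0 |>.mono fun t ht => intervalIntegral_im
        ((hk.mono Icc_subset_Ici_self).intervalIntegrable_of_Icc ht))
  have hdir (t : ℝ) (ht : 0 ≤ t) :
      w t / (‖w t‖ : ℂ) = w 0 / (‖w 0‖ : ℂ) * cexp ((K t).im * Complex.I) := by
    have hexp : cexp (K t) / ((rexp (K t).re : ℝ) : ℂ) = cexp ((K t).im * Complex.I) := by
      rw [Complex.ofReal_exp, ← Complex.exp_sub]
      congr 1
      linear_combination -Complex.re_add_im (K t)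
    rw [eq_mul_cexp_integral_of_hasDerivWithinAt hk hw ht, norm_mul, Complex.norm_exp,
      Complex.ofReal_mul, mul_div_mul_comm, hexp]
  refine ⟨w 0 / (‖w 0‖ : ℂ) * cexp ((∫ s in Ioi 0, (k s).im : ℝ) * Complex.I), ?_, ?_⟩
  · rw [norm_mul, Complex.norm_exp_ofReal_mul_I, mul_one, norm_div, Complex.norm_real, norm_norm,
      div_self (norm_ne_zero_iff.2 hw0)]
  · refine Tendsto.congr' (eventually_ge_atTop 0 |>.mono fun t ht => (hdir t ht).symm) ?_
    exact tendsto_const_nhds.mul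
      ((Complex.continuous_ofReal.tendsto _).comp hK |>.mul_const _ |>.cexp)

theorem tendsto_zero_and_tendsto_div_norm_of_re_lt (hk : ContinuousOn k (Ici 0))
    (hw : ∀ t ∈ Ici (0 : ℝ), HasDerivWithinAt w (w t * k t) (Ici 0) t) {c C δ : ℝ} (hc : c < 0)
    (hw0 : w 0 ≠ 0) (hδ : ‖w 0‖ < δ) (hre : ∀ t ∈ Ici (0 : ℝ), ‖w t‖ < δ → (k t).re < c)
    (him : ∀ t ∈ Ici (0 : ℝ), ‖w t‖ < δ → |(k t).im| ≤ C * ‖w t‖) :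
    Tendsto w atTop (𝓝 0) ∧ (∀ t ∈ Ici (0 : ℝ), w t ≠ 0) ∧
      ∃ u : ℂ, ‖u‖ = 1 ∧ Tendsto (fun t => w t / (‖w t‖ : ℂ)) atTop (𝓝 u) := by
  have hdecay (t : ℝ) (ht : 0 ≤ t) : ‖w t‖ ≤ ‖w 0‖ * rexp (c * t) :=
    norm_le_mul_exp_of_re_lt hk hw hc.le hδ hre ht
  have hsmall (t : ℝ) (ht : 0 ≤ t) : ‖w t‖ < δ :=
    (hdecay t ht).trans_lt <| (mul_le_of_le_one_right (norm_nonneg _)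
      (Real.exp_le_one_iff.2 (mul_nonpos_of_nonpos_of_nonneg hc.le ht))).trans_lt hδ
  have hC : 0 ≤ C := nonneg_of_mul_nonneg_left ((abs_nonneg _).trans (him 0 self_mem_Ici hδ))
    (norm_pos_iff.2 hw0)
  refine ⟨?_, fun t ht => ?_, exists_tendsto_div_norm_of_integrableOn_im hk hw hw0 ?_⟩
  · refine squeeze_zero_norm' (eventually_ge_atTop 0 |>.mono hdecay) ?_
    simpa using
      (Real.tendsto_exp_atBot.comp (tendsto_id.const_mul_atTop_of_neg hc)).const_mul ‖w 0‖
  · rw [eq_mul_cexp_integral_of_hasDerivWithinAt hk hw ht]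
    exact mul_ne_zero hw0 (Complex.exp_ne_zero _)
  · refine Integrable.mono' ((exp_neg_integrableOn_Ioi 0 (neg_pos.2 hc)).const_mul (C * ‖w 0‖))
      ((Complex.continuous_im.comp_continuousOn hk).mono Ioi_subset_Ici_self
        |>.aestronglyMeasurable measurableSet_Ioi) ?_
    filter_upwards [ae_restrict_mem measurableSet_Ioi] with t ht
    calc ‖(k t).im‖ ≤ C * ‖w t‖ := him t (Ioi_subset_Ici_self ht) (hsmall t ht.le)
      _ ≤ C * (‖w 0‖ * rexp (c * t)) := mul_le_mul_of_nonneg_left (hdecay t ht.le) hC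
      _ = C * ‖w 0‖ * rexp (- -c * t) := by ring_nf

end LinearEquation

theorem exists_mem_Ico_cexp_mul_I_eq {u : ℂ} (hu : ‖u‖ = 1) :
    ∃ θ ∈ Ico 0 (2 * π), cexp (θ * Complex.I) = u := by
  have hper : Function.Periodic (fun θ : ℝ => cexp (θ * Complex.I)) (2 * π) := fun θ => by
    simpa using Complex.exp_mul_I_periodic θ
  refine ⟨toIcoMod Real.two_pi_pos 0 (Complex.arg u), toIcoMod_mem_Ico' _ _, ?_⟩
  rw [← self_sub_toIcoDiv_zsmul, hper.sub_zsmul_eq]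
  simpa [hu] using Complex.norm_mul_exp_arg_mul_I u

theorem exists_eventually_abs_im_le_of_im_eq_zero {g : ℂ → ℂ} {a : ℂ} (hg : DifferentiableAt ℂ g a)
    (ha : (g a).im = 0) : ∃ C, ∀ᶠ z in 𝓝 a, |(g z).im| ≤ C * ‖z - a‖ := by
  obtain ⟨C, hC⟩ := hg.isBigO_sub.bound
  refine ⟨C, hC.mono fun z hz => ?_⟩
  calc |(g z).im| = |(g z - g a).im| := by simp [ha]
    _ ≤ ‖g z - g a‖ := Complex.abs_im_le_norm _
    _ ≤ C * ‖z - a‖ := hz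

theorem stmt_2_general (Ω : Set ℂ) (hΩ : IsOpen Ω)
    (F : ℂ → ℂ) (hF : DifferentiableOn ℂ F Ω)
    (a : ℂ) (ha : a ∈ Ω) (hFa : F a = 0)
    (hre : (deriv F a).re < 0) (him : (deriv F a).im = 0) :
    ∃ δ > 0, ∀ γ : ℝ → ℂ, IsSolOn F Ω (Ici 0) γ →
      0 < dist (γ 0) a → dist (γ 0) a < δ →
        Tendsto γ atTop (nhds a) ∧ (∀ t ∈ Ici (0 : ℝ), γ t ≠ a) ∧
        ∃ θ₀ ∈ Ico 0 (2 * Real.pi),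
          Tendsto (fun t => (γ t - a) / ((‖γ t - a‖ : ℝ) : ℂ)) atTop
            (nhds (Complex.exp ((θ₀ : ℂ) * Complex.I))) := by
  set g := dslope F a
  have hΩa : Ω ∈ 𝓝 a := hΩ.mem_nhds ha
  have hg : DifferentiableOn ℂ g Ω := (Complex.differentiableOn_dslope hΩa).2 hF
  have hga : g a = deriv F a := dslope_same F a
  have hFg (z : ℂ) : F z = (z - a) * g z := by simpa [hFa] using (sub_smul_dslope F a z).symm
  obtain ⟨C, hC⟩ := exists_eventually_abs_im_le_of_im_eq_zero (hg.differentiableAt hΩa) (hga ▸ him)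
  have hgre : ∀ᶠ z in 𝓝 a, (g z).re < (deriv F a).re / 2 :=
    ((Complex.continuous_re.tendsto _).comp (hg.continuousOn.continuousAt hΩa)).eventually_lt_const
      (by rw [hga]; linarith)
  obtain ⟨δ, hδ, hball⟩ :=
    Metric.eventually_nhds_iff_ball.1 ((eventually_mem_set.2 hΩa).and (hgre.and hC))
  refine ⟨δ, hδ, fun γ hγ h0 h0δ => ?_⟩
  rw [dist_eq_norm] at h0 h0δ
  have hγball (t : ℝ) (ht : ‖γ t - a‖ < δ) : γ t ∈ Metric.ball a δ := by
    rwa [Metric.mem_ball, dist_eq_norm]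
  obtain ⟨hlim, hne, u, hu, hdir⟩ := tendsto_zero_and_tendsto_div_norm_of_re_lt
    (w := fun t => γ t - a) (k := fun t => g (γ t))
    (hg.continuousOn.comp (fun t ht => (hγ t ht).2.continuousWithinAt) fun t ht => (hγ t ht).1)
    (fun t ht => by simpa [hFg] using (hγ t ht).2.sub_const a) (by linarith)
    (norm_pos_iff.1 h0) h0δ (fun t _ ht => (hball _ (hγball t ht)).2.1)
    (fun t _ ht => (hball _ (hγball t ht)).2.2)
  obtain ⟨θ, hθ, rfl⟩ := exists_mem_Ico_cexp_mul_I_eq hu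
  exact ⟨tendsto_sub_nhds_zero_iff.1 hlim, fun t ht => sub_ne_zero.1 (hne t ht), θ, hθ, hdir⟩

/-- If `F'(a)` is real and negative at an equilibrium `a` of a holomorphic flow,
then `a` is a stable node: nearby solutions tend to `a` in a definite direction `θ₀`. -/
theorem stmt_2 (Ω : Set ℂ) (hΩ : IsOpen Ω) (hconn : IsConnected Ω)
    (F : ℂ → ℂ) (hF : DifferentiableOn ℂ F Ω) (hF0 : ∃ z ∈ Ω, F z ≠ 0)
    (a : ℂ) (ha : a ∈ Ω) (hFa : F a = 0)
    (hre : (deriv F a).re < 0) (him : (deriv F a).im = 0) :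
    ∃ δ > 0, ∀ γ : ℝ → ℂ, IsSolOn F Ω (Ici 0) γ →
      0 < dist (γ 0) a → dist (γ 0) a < δ →
        Tendsto γ atTop (nhds a) ∧ (∀ t ∈ Ici (0 : ℝ), γ t ≠ a) ∧
        ∃ θ₀ ∈ Ico 0 (2 * Real.pi),
          Tendsto (fun t => (γ t - a) / ((‖γ t - a‖ : ℝ) : ℂ)) atTop
            (nhds (Complex.exp ((θ₀ : ℂ) * Complex.I))) :=
  stmt_2_general Ω hΩ F hF a ha hFa hre him
end

section
/- Let Ω ⊆ ℂ be open and connected, F holomorphic on Ω with F ≢ 0, and a ∈ Ω an equilibrium with Re F′(a) < 0 and Im F′(a) ≠ 0. Then there exists δ > 0 such that every solution γ : [0,∞) → Ω of ẋ = F(x) with 0 < |γ(0) − a| < δ satisfies γ(t) → a as t → ∞, γ(t) ≠ a for all t ≥ 0, and every continuous function θ : [0,∞) → ℝ satisfying γ(t) − a = |γ(t) − a|·e^{iθ(t)} for all t ≥ 0 has |θ(t)| → ∞ as t → ∞; that is, a is a stable focus and nearby orbits spiral into a. -/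
/-!
Write `w = γ - a` and `l = F'(a)`. Near `a`, `F z = l (z - a) + o(|z - a|)`, so in a small ball
`d/dt |w|² = 2 Re(w̄ F(γ)) ≤ (Re l) |w|² < 0` and `|F(γ)| ≤ C |w|`. By comparison (Grönwall)
the solution stays in the ball and `|w|²` is squeezed between `|w(0)|² e^{-2Ct}` and
`|w(0)|² e^{(Re l/2) t}`: it tends to `0` without ever vanishing. A continuous argument `θ` of
the nonvanishing curve `w` is then differentiable with `θ' = Im (w'/w) = Im (F(γ)/w)`, which stays
within `|Im l|/2` of `Im l ≠ 0`; hence `|θ t| ≥ |Im l| t / 2 - |θ 0|`.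
-/

open Set Filter Topology

open Metric

theorem mem_ball_of_sq_norm_sub_le_mul_exp {E : Type*} [SeminormedAddCommGroup E]
    {x y a : E} {δ c : ℝ} (hc : c ≤ 0) (hy : y ∈ ball a δ)
    (h : ‖x - a‖ ^ 2 ≤ ‖y - a‖ ^ 2 * Real.exp c) : x ∈ ball a δ := by
  rw [mem_ball, dist_eq_norm] at hy ⊢
  have hexp : ‖y - a‖ ^ 2 * Real.exp c ≤ ‖y - a‖ ^ 2 :=
    mul_le_of_le_one_right (sq_nonneg _) (Real.exp_le_one_iff.2 hc)
  exact lt_of_pow_lt_pow_left₀ 2 ((norm_nonneg _).trans hy.le)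
    ((h.trans hexp).trans_lt (pow_lt_pow_left₀ hy (norm_nonneg _) two_ne_zero))

section Lyapunov

variable {E : Type*} [NormedAddCommGroup E] [InnerProductSpace ℝ E] {F : E → E} {γ : ℝ → E}
  {a : E}

theorem sq_norm_sub_le_mul_exp_of_inner_le {δ κ : ℝ} (hκ : κ < 0)
    (hF : ∀ z ∈ ball a δ, inner ℝ (z - a) (F z) ≤ κ * ‖z - a‖ ^ 2)
    (hγ : ∀ t ∈ Ici (0 : ℝ), HasDerivWithinAt γ (F (γ t)) (Ici 0) t)
    (h0 : γ 0 ≠ a) (hδ : γ 0 ∈ ball a δ) {t : ℝ} (ht : 0 ≤ t) :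
    ‖γ t - a‖ ^ 2 ≤ ‖γ 0 - a‖ ^ 2 * Real.exp (κ * t) := by
  have hg : ∀ s ∈ Ici (0 : ℝ), HasDerivWithinAt (fun u => ‖γ u - a‖ ^ 2)
      (2 * inner ℝ (γ s - a) (F (γ s))) (Ici 0) s :=
    fun s hs => ((hγ s hs).sub_const a).norm_sq
  have hg0 : 0 < ‖γ 0 - a‖ ^ 2 := pow_pos (norm_pos_iff.2 (sub_ne_zero.2 h0)) 2
  refine image_le_of_deriv_right_lt_deriv_boundary' (b := t)
    (fun s hs => (hg s hs.1).continuousWithinAt.mono Icc_subset_Ici_self)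
    (fun s hs => (hg s hs.1).mono (Ici_subset_Ici.2 hs.1)) (by simp) (by fun_prop)
    (fun s _ => (((hasDerivAt_id' s).const_mul κ).exp.const_mul _).hasDerivWithinAt)
    ?_ ⟨ht, le_rfl⟩
  -- where `|γ - a|²` touches the barrier `|γ 0 - a|² e^{κ s}`, `γ s` is still in the ball, so
  -- the slope is at most `2κ |γ s - a|²`, strictly below the barrier's slope `κ |γ s - a|²`.
  intro s hs hgs
  have hpos : 0 < ‖γ s - a‖ ^ 2 := hgs ▸ mul_pos hg0 (Real.exp_pos _)
  have := hF _ (mem_ball_of_sq_norm_sub_le_mul_exp (by nlinarith [hs.1]) hδ hgs.le)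
  simp only [mul_one] at hgs ⊢
  nlinarith

theorem mem_ball_of_inner_le {δ κ : ℝ} (hκ : κ < 0)
    (hF : ∀ z ∈ ball a δ, inner ℝ (z - a) (F z) ≤ κ * ‖z - a‖ ^ 2)
    (hγ : ∀ t ∈ Ici (0 : ℝ), HasDerivWithinAt γ (F (γ t)) (Ici 0) t)
    (h0 : γ 0 ≠ a) (hδ : γ 0 ∈ ball a δ) {t : ℝ} (ht : 0 ≤ t) : γ t ∈ ball a δ :=
  mem_ball_of_sq_norm_sub_le_mul_exp (by nlinarith) hδ
    (sq_norm_sub_le_mul_exp_of_inner_le hκ hF hγ h0 hδ ht)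

theorem mul_exp_le_sq_norm_sub_of_norm_le {C : ℝ}
    (hF : ∀ t ∈ Ici (0 : ℝ), ‖F (γ t)‖ ≤ C * ‖γ t - a‖)
    (hγ : ∀ t ∈ Ici (0 : ℝ), HasDerivWithinAt γ (F (γ t)) (Ici 0) t) {t : ℝ} (ht : 0 ≤ t) :
    ‖γ 0 - a‖ ^ 2 * Real.exp (-(2 * C) * t) ≤ ‖γ t - a‖ ^ 2 := by
  have hg : ∀ s ∈ Ici (0 : ℝ), HasDerivWithinAt (fun u => -‖γ u - a‖ ^ 2)
      (-(2 * inner ℝ (γ s - a) (F (γ s)))) (Ici 0) s :=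
    fun s hs => ((hγ s hs).sub_const a).norm_sq.neg
  have := le_gronwallBound_of_liminf_deriv_right_le (b := t) (ε := 0) (K := -(2 * C))
    (fun s hs => (hg s hs.1).continuousWithinAt.mono Icc_subset_Ici_self)
    (fun s hs r hr => ((hg s hs.1).mono (Ici_subset_Ici.2 hs.1)).liminf_right_slope_le hr)
    le_rfl (fun s hs => ?_) t ⟨ht, le_rfl⟩
  · rw [gronwallBound_ε0, sub_zero] at this
    linarith
  · have h1 := real_inner_le_norm (γ s - a) (-F (γ s))
    have h2 := hF s hs.1
    rw [inner_neg_right, norm_neg] at h1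
    nlinarith [norm_nonneg (γ s - a)]

theorem ne_of_norm_le_mul_norm_sub {C : ℝ}
    (hF : ∀ t ∈ Ici (0 : ℝ), ‖F (γ t)‖ ≤ C * ‖γ t - a‖)
    (hγ : ∀ t ∈ Ici (0 : ℝ), HasDerivWithinAt γ (F (γ t)) (Ici 0) t) (h0 : γ 0 ≠ a) {t : ℝ}
    (ht : 0 ≤ t) : γ t ≠ a := by
  have hpos : 0 < ‖γ 0 - a‖ ^ 2 * Real.exp (-(2 * C) * t) :=
    mul_pos (pow_pos (norm_pos_iff.2 (sub_ne_zero.2 h0)) 2) (Real.exp_pos _)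
  have := hpos.trans_le (mul_exp_le_sq_norm_sub_of_norm_le hF hγ ht)
  rintro rfl
  simp at this

theorem tendsto_of_inner_le {δ κ : ℝ} (hκ : κ < 0)
    (hF : ∀ z ∈ ball a δ, inner ℝ (z - a) (F z) ≤ κ * ‖z - a‖ ^ 2)
    (hγ : ∀ t ∈ Ici (0 : ℝ), HasDerivWithinAt γ (F (γ t)) (Ici 0) t)
    (h0 : γ 0 ≠ a) (hδ : γ 0 ∈ ball a δ) : Tendsto γ atTop (𝓝 a) := by
  have hexp : Tendsto (fun t => ‖γ 0 - a‖ ^ 2 * Real.exp (κ * t)) atTop (𝓝 0) := by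
    simpa using (Real.tendsto_exp_atBot.comp
      (tendsto_id.const_mul_atTop_of_neg hκ)).const_mul (‖γ 0 - a‖ ^ 2)
  have hsq : Tendsto (fun t => ‖γ t - a‖ ^ 2) atTop (𝓝 0) :=
    squeeze_zero' (Eventually.of_forall fun _ => by positivity)
      ((eventually_ge_atTop 0).mono fun _ ht =>
        sq_norm_sub_le_mul_exp_of_inner_le hκ hF hγ h0 hδ ht) hexp
  rw [tendsto_iff_norm_sub_tendsto_zero]
  simpa using hsq.sqrt

end Lyapunov

theorem tendsto_abs_atTop_of_abs_sub_mul_le {θ : ℝ → ℝ} {c ε : ℝ} (hε : ε < |c|)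
    (h : ∀ t ≥ 0, |θ t - θ 0 - t * c| ≤ ε * t) : Tendsto (fun t => |θ t|) atTop atTop := by
  have hlin : Tendsto (fun t => (|c| - ε) * t - |θ 0|) atTop atTop :=
    tendsto_atTop_add_const_right _ _ (tendsto_id.const_mul_atTop (sub_pos.2 hε))
  refine tendsto_atTop_mono' _ ((eventually_ge_atTop 0).mono fun t ht => ?_) hlin
  have h1 : |t * c| - |θ t - θ 0| ≤ |θ t - θ 0 - t * c| := by
    rw [abs_sub_comm (θ t - θ 0)]
    exact abs_sub_abs_le_abs_sub _ _
  have h2 : |t * c| = t * |c| := by rw [abs_mul, abs_of_nonneg ht]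
  linarith [h t ht, abs_sub (θ t) (θ 0)]

namespace Complex

theorem real_inner_le_of_norm_sub_mul_le {w v l : ℂ} {ε : ℝ}
    (h : ‖v - l * w‖ ≤ ε * ‖w‖) : inner ℝ w v ≤ (l.re + ε) * ‖w‖ ^ 2 := by
  have hlin : inner ℝ w (l * w) = l.re * ‖w‖ ^ 2 := by
    rw [Complex.inner, mul_assoc, mul_conj, re_mul_ofReal, normSq_eq_norm_sq]
  have hrest := real_inner_le_norm w (v - l * w)
  rw [inner_sub_right, hlin] at hrest
  nlinarith [norm_nonneg w]

theorem norm_div_sub_le_of_norm_sub_mul_le {w v l : ℂ} {ε : ℝ} (hw : w ≠ 0)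
    (h : ‖v - l * w‖ ≤ ε * ‖w‖) : ‖v / w - l‖ ≤ ε := by
  rwa [div_sub' hw, norm_div, div_le_iff₀ (norm_pos_iff.2 hw), mul_comm w l]

theorem arg_exp_ofReal_mul_I {x : ℝ} (hx : x ∈ Ioc (-Real.pi) Real.pi) :
    arg (exp (x * I)) = x := by
  rw [arg_exp, mul_I_im, ofReal_re, toIocMod_eq_self]
  simpa [two_mul, ← add_assoc] using hx

end Complex

section ContinuousArgument

open Complex

theorem hasDerivWithinAt_of_eq_norm_mul_exp {w : ℝ → ℂ} {θ : ℝ → ℝ} {w' : ℂ} {s : Set ℝ}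
    {t : ℝ} (hw : HasDerivWithinAt w w' s t) (hwt : w t ≠ 0) (hθ : ContinuousWithinAt θ s t)
    (hrep : ∀ u ∈ s, w u = ‖w u‖ * exp (θ u * I)) (ht : t ∈ s) :
    HasDerivWithinAt θ (w' / w t).im s t := by
  have hlog : HasDerivWithinAt (fun u => log (w u / w t)) (w' / w t) s t := by
    simpa [div_self hwt] using (hw.div_const (w t)).clog_real (by simp [div_self hwt])
  have harg : HasDerivWithinAt (fun u => θ t + arg (w u / w t)) (w' / w t).im s t := by
    simpa [log_im] using (imCLM.hasFDerivAt.comp_hasDerivWithinAt t hlog).const_add (θ t)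
  -- Near `t`, both `θ u - θ t` and `arg (w u / w t)` are arguments of `w u / w t` in `(-π, π]`.
  refine harg.congr_of_eventuallyEq ?_ (by simp [div_self hwt])
  filter_upwards [self_mem_nhdsWithin,
    hθ (Ioo_mem_nhds (sub_lt_self _ Real.pi_pos) (lt_add_of_pos_right _ Real.pi_pos)),
    hw.continuousWithinAt.eventually_ne hwt] with u hu hθu hwu
  have hquot : w u / w t = ((‖w u‖ / ‖w t‖ : ℝ) : ℂ) * exp ((θ u - θ t : ℝ) * I) := by
    have hexp : exp ((θ u - θ t : ℝ) * I) = exp (θ u * I) / exp (θ t * I) := by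
      rw [ofReal_sub, sub_mul, exp_sub]
    rw [hexp, ofReal_div, div_mul_div_comm, ← hrep u hu, ← hrep t ht]
  rw [hquot, arg_real_mul _ (by positivity), arg_exp_ofReal_mul_I]
  · ring
  · exact ⟨by linarith [hθu.1], by linarith [hθu.2]⟩

theorem abs_sub_sub_mul_im_le {F : ℂ → ℂ} {γ : ℝ → ℂ} {θ : ℝ → ℝ} {a l : ℂ} {ε : ℝ}
    (hF : ∀ t ∈ Ici (0 : ℝ), ‖F (γ t) - l * (γ t - a)‖ ≤ ε * ‖γ t - a‖)
    (hγ : ∀ t ∈ Ici (0 : ℝ), HasDerivWithinAt γ (F (γ t)) (Ici 0) t)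
    (hne : ∀ t ∈ Ici (0 : ℝ), γ t ≠ a) (hθ : ContinuousOn θ (Ici 0))
    (hrep : ∀ t ∈ Ici (0 : ℝ), γ t - a = ‖γ t - a‖ * exp (θ t * I)) {t : ℝ} (ht : 0 ≤ t) :
    |θ t - θ 0 - t * l.im| ≤ ε * t := by
  have hθ' : ∀ s ∈ Ici (0 : ℝ),
      HasDerivWithinAt (fun u => θ u - u * l.im) ((F (γ s) / (γ s - a)).im - l.im) (Ici 0) s :=
    fun s hs => (hasDerivWithinAt_of_eq_norm_mul_exp ((hγ s hs).sub_const a)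
      (sub_ne_zero.2 (hne s hs)) (hθ s hs) hrep hs).sub ((hasDerivAt_mul_const _).hasDerivWithinAt)
  have := norm_image_sub_le_of_norm_deriv_right_le_segment (b := t) (C := ε)
    (fun s hs => (hθ' s hs.1).continuousWithinAt.mono Icc_subset_Ici_self)
    (fun s hs => (hθ' s hs.1).mono (Ici_subset_Ici.2 hs.1))
    (fun s hs => ?_) t ⟨ht, le_rfl⟩
  · simpa [sub_sub, add_comm] using this
  · rw [Real.norm_eq_abs, ← sub_im]
    exact (abs_im_le_norm _).trans
      (norm_div_sub_le_of_norm_sub_mul_le (sub_ne_zero.2 (hne s hs.1)) (hF s hs.1))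

end ContinuousArgument

theorem stmt_3_general (Ω : Set ℂ) (hΩ : IsOpen Ω)
    (F : ℂ → ℂ) (hF : DifferentiableOn ℂ F Ω)
    (a : ℂ) (ha : a ∈ Ω) (hFa : F a = 0)
    (hre : (deriv F a).re < 0) (him : (deriv F a).im ≠ 0) :
    ∃ δ > 0, ∀ γ : ℝ → ℂ, IsSolOn F Ω (Ici 0) γ →
      0 < dist (γ 0) a → dist (γ 0) a < δ →
        Tendsto γ atTop (nhds a) ∧ (∀ t ∈ Ici (0 : ℝ), γ t ≠ a) ∧
        ∀ θ : ℝ → ℝ, ContinuousOn θ (Ici 0) →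
          (∀ t ∈ Ici (0 : ℝ), γ t - a =
            ((‖γ t - a‖ : ℝ) : ℂ) * Complex.exp ((θ t : ℂ) * Complex.I)) →
          Tendsto (fun t => |θ t|) atTop atTop := by
  set l := deriv F a
  set ε := min (-l.re / 2) (|l.im| / 2)
  have hε : 0 < ε := lt_min (by linarith) (by positivity)
  have hlin : ∀ᶠ z in 𝓝 a, ‖F z - l * (z - a)‖ ≤ ε * ‖z - a‖ := by
    have hl := (hF.differentiableAt (hΩ.mem_nhds ha)).hasDerivAt
    simpa [hFa, mul_comm l] using (hasDerivAt_iff_isLittleO.1 hl).def hε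
  obtain ⟨δ, hδ, hball⟩ := eventually_nhds_iff_ball.1 hlin
  refine ⟨δ, hδ, fun γ hγ h0 h0δ => ?_⟩
  have hγ' : ∀ t ∈ Ici (0 : ℝ), HasDerivWithinAt γ (F (γ t)) (Ici 0) t := fun t ht => (hγ t ht).2
  have hγ0 : γ 0 ≠ a := dist_pos.1 h0
  have hκ : l.re + ε < 0 := by linarith [min_le_left (-l.re / 2) (|l.im| / 2)]
  have hinner : ∀ z ∈ ball a δ, inner ℝ (z - a) (F z) ≤ (l.re + ε) * ‖z - a‖ ^ 2 :=
    fun z hz => Complex.real_inner_le_of_norm_sub_mul_le (hball z hz)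
  have hlinγ : ∀ t ∈ Ici (0 : ℝ), ‖F (γ t) - l * (γ t - a)‖ ≤ ε * ‖γ t - a‖ :=
    fun t ht => hball _ (mem_ball_of_inner_le hκ hinner hγ' hγ0 h0δ ht)
  have hboundγ : ∀ t ∈ Ici (0 : ℝ), ‖F (γ t)‖ ≤ (‖l‖ + ε) * ‖γ t - a‖ := fun t ht => by
    have := norm_sub_norm_le (F (γ t)) (l * (γ t - a))
    rw [norm_mul] at this
    linarith [hlinγ t ht]
  have hne : ∀ t ∈ Ici (0 : ℝ), γ t ≠ a :=
    fun t ht => ne_of_norm_le_mul_norm_sub hboundγ hγ' hγ0 ht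
  refine ⟨tendsto_of_inner_le hκ hinner hγ' hγ0 h0δ, hne, fun θ hθ hrep => ?_⟩
  exact tendsto_abs_atTop_of_abs_sub_mul_le (by linarith [min_le_right (-l.re / 2) (|l.im| / 2)])
    fun t ht => abs_sub_sub_mul_im_le hlinγ hγ' hne hθ hrep ht

/-- If `Re F'(a) < 0` and `Im F'(a) ≠ 0` at an equilibrium `a` of a holomorphic
flow, then `a` is a stable focus: nearby solutions tend to `a`, stay away from `a`, and any
continuous argument of `γ − a` blows up in absolute value. -/
theorem stmt_3 (Ω : Set ℂ) (hΩ : IsOpen Ω) (hconn : IsConnected Ω)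
    (F : ℂ → ℂ) (hF : DifferentiableOn ℂ F Ω) (hF0 : ∃ z ∈ Ω, F z ≠ 0)
    (a : ℂ) (ha : a ∈ Ω) (hFa : F a = 0)
    (hre : (deriv F a).re < 0) (him : (deriv F a).im ≠ 0) :
    ∃ δ > 0, ∀ γ : ℝ → ℂ, IsSolOn F Ω (Ici 0) γ →
      0 < dist (γ 0) a → dist (γ 0) a < δ →
        Tendsto γ atTop (nhds a) ∧ (∀ t ∈ Ici (0 : ℝ), γ t ≠ a) ∧
        ∀ θ : ℝ → ℝ, ContinuousOn θ (Ici 0) →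
          (∀ t ∈ Ici (0 : ℝ), γ t - a =
            ((‖γ t - a‖ : ℝ) : ℂ) * Complex.exp ((θ t : ℂ) * Complex.I)) →
          Tendsto (fun t => |θ t|) atTop atTop :=
  stmt_3_general Ω hΩ F hF a ha hFa hre him
end

section
/- Let Ω ⊆ ℂ be open and connected, F holomorphic on Ω with F ≢ 0, and a ∈ Ω an equilibrium with Re F′(a) = 0 and Im F′(a) ≠ 0. Then a is a center or a focus; precisely, there exists δ > 0 such that at least one of the following holds: (a) every maximal solution of ẋ = F(x) through a point of { y : 0 < |y − a| < δ } is a nonconstant periodic solution γ : ℝ → Ω; (b) every solution γ : [0,∞) → Ω with 0 < |γ(0) − a| < δ satisfies γ(t) → a as t → ∞ and every continuous θ : [0,∞) → ℝ with γ(t) − a = |γ(t) − a|·e^{iθ(t)} has |θ(t)| → ∞; (c) the statement of (b) with [0,∞) replaced by (−∞,0] and t → ∞ replaced by t → −∞. -/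
/-!
Since `F'(a) ≠ 0`, the field is holomorphically linearizable at `a`: there is a chart `ψ` with
`ψ a = 0` and `ψ' F = F'(a) ψ`, so `ψ` carries solutions of `ẋ = F x` to solutions
`w(t) = exp (t F'(a)) w₀` of the linear equation. For purely imaginary `F'(a)` these rotate
circles about `0` with period `2π / |Im F'(a)|`, so every orbit near `a` is a closed curve and
`a` is a center.
-/

open Set Filter Topology

open Metric Real

def IsLinearizingChart (F : ℂ → ℂ) (c : ℂ) (e : OpenPartialHomeomorph ℂ ℂ) : Prop :=
  ∀ z ∈ e.source, DifferentiableAt ℂ e z ∧ deriv e z ≠ 0 ∧ deriv e z * F z = c * e z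

/-- Near a simple zero `a` of `F` the conjugacy equation `ψ' F = F'(a) ψ` is solved by
`ψ z = (z - a) exp (u z)`, where `u` is a primitive of `F'(a) / F - 1 / (z - a)`, which is
holomorphic at `a` since `F'(a) / F` has a simple pole with residue `1` there. -/
theorem exists_linearization_on_ball {Ω : Set ℂ} (hΩ : IsOpen Ω) {F : ℂ → ℂ}
    (hF : DifferentiableOn ℂ F Ω) {a : ℂ} (ha : a ∈ Ω) (hFa : F a = 0) (hc : deriv F a ≠ 0) :
    ∃ r > 0, ∃ ψ : ℂ → ℂ, ball a r ⊆ Ω ∧ ψ a = 0 ∧ DifferentiableOn ℂ ψ (ball a r) ∧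
      ∀ z ∈ ball a r, deriv ψ z ≠ 0 ∧ deriv ψ z * F z = deriv F a * ψ z := by
  obtain ⟨r₀, hr₀, hΩball⟩ := Metric.mem_nhds_iff.1 (hΩ.mem_nhds ha)
  have hnhds : ball a r₀ ∈ 𝓝 a := ball_mem_nhds a hr₀
  set G := dslope F a
  set H := dslope G a
  have hG : DifferentiableOn ℂ G (ball a r₀) :=
    (Complex.differentiableOn_dslope hnhds).2 (hF.mono hΩball)
  have hH : DifferentiableOn ℂ H (ball a r₀) := (Complex.differentiableOn_dslope hnhds).2 hG
  have hGa : G a = deriv F a := dslope_same F a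
  obtain ⟨r, hr, hr_good⟩ : ∃ r > 0, ∀ z ∈ ball a r, z ∈ ball a r₀ ∧ G z ≠ 0 :=
    Metric.eventually_nhds_iff_ball.1 <| Eventually.and hnhds <|
      (hG.continuousOn.continuousAt hnhds).eventually_ne (hGa ▸ hc)
  have hsub : ball a r ⊆ ball a r₀ := fun z hz => (hr_good z hz).1
  have hh : DifferentiableOn ℂ (fun z => -(H z / G z)) (ball a r) :=
    ((hH.mono hsub).div (hG.mono hsub) fun z hz => (hr_good z hz).2).neg
  obtain ⟨u, hu⟩ := hh.isExactOn_ball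
  set ψ : ℂ → ℂ := fun z => (z - a) * Complex.exp (u z)
  have hψ : ∀ z ∈ ball a r,
      HasDerivAt ψ (Complex.exp (u z) * (1 + (z - a) * -(H z / G z))) z := by
    intro z hz
    refine (((hasDerivAt_id z).sub_const a).fun_mul (hu z hz).cexp).congr_deriv ?_
    simp only [id]
    ring
  refine ⟨r, hr, ψ, fun z hz => hΩball (hr_good z hz).1, by simp [ψ],
    fun z hz => (hψ z hz).differentiableAt.differentiableWithinAt, fun z hz => ?_⟩
  obtain ⟨-, hGz⟩ := hr_good z hz
  have hF_eq : F z = (z - a) * G z := by simpa [hFa] using (sub_smul_dslope F a z).symm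
  have hH_eq : (z - a) * H z = G z - deriv F a := by
    simpa [hGa] using sub_smul_dslope G a z
  have hderiv_mul_G : deriv ψ z * G z = Complex.exp (u z) * deriv F a := by
    rw [(hψ z hz).deriv, mul_assoc]
    congr 1
    field_simp
    linear_combination -hH_eq
  refine ⟨fun h0 => ?_, ?_⟩
  · rw [h0, zero_mul] at hderiv_mul_G
    exact mul_ne_zero (Complex.exp_ne_zero _) hc hderiv_mul_G.symm
  · rw [hF_eq]
    linear_combination (z - a) * hderiv_mul_G

theorem exists_isLinearizingChart {Ω : Set ℂ} (hΩ : IsOpen Ω) {F : ℂ → ℂ}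
    (hF : DifferentiableOn ℂ F Ω) {a : ℂ} (ha : a ∈ Ω) (hFa : F a = 0) (hc : deriv F a ≠ 0) :
    ∃ e : OpenPartialHomeomorph ℂ ℂ, IsLinearizingChart F (deriv F a) e ∧
      a ∈ e.source ∧ e a = 0 ∧ e.source ⊆ Ω := by
  obtain ⟨r, hr, ψ, hΩball, hψa, hψ, hψ_good⟩ := exists_linearization_on_ball hΩ hF ha hFa hc
  have hstrict : HasStrictDerivAt ψ (deriv ψ a) a :=
    (hψ.analyticAt (ball_mem_nhds a hr)).hasStrictDerivAt
  have hψ'a : deriv ψ a ≠ 0 := (hψ_good a (mem_ball_self hr)).1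
  set e₀ := (hstrict.hasStrictFDerivAt_equiv hψ'a).toOpenPartialHomeomorph ψ
  set e := e₀.restrOpen (ball a r) isOpen_ball
  have he_source : e.source = e₀.source ∩ ball a r := e₀.restrOpen_source _ _
  refine ⟨e, fun z hz => ?_, ?_, hψa, ?_⟩
  · rw [he_source] at hz
    exact ⟨(hψ z hz.2).differentiableAt (isOpen_ball.mem_nhds hz.2), hψ_good z hz.2⟩
  · rw [he_source]
    exact ⟨HasStrictFDerivAt.mem_toOpenPartialHomeomorph_source _, mem_ball_self hr⟩
  · rw [he_source]
    exact inter_subset_right.trans hΩball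

theorem Complex.exp_pi_div_abs_im_mul {c : ℂ} (hre : c.re = 0) (him : c.im ≠ 0) :
    Complex.exp (↑(π / |c.im|) * c) = -1 := by
  have hc : c = c.im * Complex.I := Complex.ext (by simp [hre]) (by simp)
  rcases abs_choice c.im with habs | habs <;> rw [habs] <;> nth_rw 2 [hc]
  · rw [← mul_assoc, ← Complex.ofReal_mul, div_mul_cancel₀ _ him, Complex.exp_pi_mul_I]
  · rw [← mul_assoc, ← Complex.ofReal_mul, div_neg, neg_mul, div_mul_cancel₀ _ him,
      Complex.ofReal_neg, neg_mul, Complex.exp_neg_pi_mul_I]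

namespace IsLinearizingChart

variable {F : ℂ → ℂ} {c : ℂ} {e : OpenPartialHomeomorph ℂ ℂ}

theorem hasDerivAt_symm_comp (he : IsLinearizingChart F c e) {η : ℝ → ℂ} {t : ℝ}
    (hηt : η t ∈ e.target) (hη : HasDerivAt η (c * η t) t) :
    HasDerivAt (fun s => e.symm (η s)) (F (e.symm (η t))) t := by
  obtain ⟨hdiff, hne, hconj⟩ := he _ (e.map_target hηt)
  rw [e.right_inv hηt] at hconj
  have hsymm := e.hasDerivAt_symm hηt hne hdiff.hasDerivAt
  refine (hsymm.comp t hη).congr_deriv ?_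
  rw [← hconj, ← mul_assoc, inv_mul_cancel₀ hne, one_mul]

theorem exists_periodic_solution (he : IsLinearizingChart F c e) (hre : c.re = 0)
    (him : c.im ≠ 0) {Ω : Set ℂ} (heΩ : e.source ⊆ Ω) {w : ℂ} (hw : w ≠ 0)
    (hsphere : sphere 0 ‖w‖ ⊆ e.target) :
    ∃ γ : ℝ → ℂ, IsSolOn F Ω univ γ ∧ γ 0 = e.symm w ∧
      (∃ T > 0, ∀ t : ℝ, γ (t + T) = γ t) ∧ ∃ t s : ℝ, γ t ≠ γ s := by
  set τ := π / |c.im|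
  have hτ : Complex.exp (τ * c) = -1 := Complex.exp_pi_div_abs_im_mul hre him
  set η : ℝ → ℂ := fun t => Complex.exp (t * c) * w
  have hη_mem : ∀ t, η t ∈ e.target := fun t =>
    hsphere (by simp [η, Complex.norm_exp, hre])
  have hη_deriv : ∀ t, HasDerivAt η (c * η t) t := fun t =>
    ((((hasDerivAt_id (t : ℂ)).mul_const c).cexp).mul_const w).comp_ofReal.congr_deriv
      (by simp only [η, id]; ring)
  have hη_periodic : ∀ t, η (t + 2 * τ) = η t := fun t => by
    simp only [η]
    rw [show ((t + 2 * τ : ℝ) : ℂ) * c = t * c + τ * c + τ * c by push_cast; ring,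
      Complex.exp_add, Complex.exp_add, hτ]
    ring
  refine ⟨fun t => e.symm (η t), fun t _ => ⟨heΩ (e.map_target (hη_mem t)),
    (he.hasDerivAt_symm_comp (hη_mem t) (hη_deriv t)).hasDerivWithinAt⟩, by simp [η],
    ⟨2 * τ, by positivity, fun t => by simp only [hη_periodic]⟩, τ, 0, fun h => hw ?_⟩
  have : η τ = η 0 := e.symm.injOn (hη_mem τ) (hη_mem 0) h
  simp only [η, hτ, Complex.ofReal_zero, zero_mul, Complex.exp_zero] at this
  linear_combination -this / 2

end IsLinearizingChart

theorem stmt_4_general (Ω : Set ℂ) (hΩ : IsOpen Ω)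
    (F : ℂ → ℂ) (hF : DifferentiableOn ℂ F Ω)
    (a : ℂ) (ha : a ∈ Ω) (hFa : F a = 0)
    (hre : (deriv F a).re = 0) (him : (deriv F a).im ≠ 0) :
    ∃ δ > 0,
      -- (a) center: through every point of the punctured δ-ball there is a nonconstant
      -- periodic global solution (hence every maximal solution there is such)
      ((∀ y : ℂ, 0 < dist y a → dist y a < δ →
        ∃ γ : ℝ → ℂ, IsSolOn F Ω univ γ ∧ γ 0 = y ∧
          (∃ T > 0, ∀ t : ℝ, γ (t + T) = γ t) ∧ (∃ t s : ℝ, γ t ≠ γ s)) ∨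
      -- (b) stable focus
      (∀ γ : ℝ → ℂ, IsSolOn F Ω (Ici 0) γ → 0 < dist (γ 0) a → dist (γ 0) a < δ →
        Tendsto γ atTop (nhds a) ∧
        ∀ θ : ℝ → ℝ, ContinuousOn θ (Ici 0) →
          (∀ t ∈ Ici (0 : ℝ), γ t - a =
            ((‖γ t - a‖ : ℝ) : ℂ) * Complex.exp ((θ t : ℂ) * Complex.I)) →
          Tendsto (fun t => |θ t|) atTop atTop) ∨
      -- (c) unstable focus
      (∀ γ : ℝ → ℂ, IsSolOn F Ω (Iic 0) γ → 0 < dist (γ 0) a → dist (γ 0) a < δ →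
        Tendsto γ atBot (nhds a) ∧
        ∀ θ : ℝ → ℝ, ContinuousOn θ (Iic 0) →
          (∀ t ∈ Iic (0 : ℝ), γ t - a =
            ((‖γ t - a‖ : ℝ) : ℂ) * Complex.exp ((θ t : ℂ) * Complex.I)) →
          Tendsto (fun t => |θ t|) atBot atTop)) := by
  have hc : deriv F a ≠ 0 := fun h => him (by rw [h, Complex.zero_im])
  obtain ⟨e, he, hae, hea, heΩ⟩ := exists_isLinearizingChart hΩ hF ha hFa hc
  obtain ⟨ρ, hρ, hρ_target⟩ :=
    Metric.mem_nhds_iff.1 (e.open_target.mem_nhds (hea ▸ e.map_source hae))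
  obtain ⟨δ, hδ, hδ_ball⟩ := Metric.mem_nhds_iff.1
    ((e.isOpen_inter_preimage isOpen_ball).mem_nhds (show a ∈ e.source ∩ e ⁻¹' ball 0 ρ by
      simpa [hea] using And.intro hae hρ))
  refine ⟨δ, hδ, Or.inl fun y hy_pos hy_lt => ?_⟩
  obtain ⟨hy, hyρ⟩ := hδ_ball (mem_ball.2 hy_lt)
  have hey : e y ≠ 0 := fun h => (dist_pos.1 hy_pos) (e.injOn hy hae (h.trans hea.symm))
  have hsphere : sphere 0 ‖e y‖ ⊆ e.target :=
    (sphere_subset_ball (mem_ball_zero_iff.1 hyρ)).trans hρ_target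
  simpa [e.left_inv hy] using he.exists_periodic_solution hre him heΩ hey hsphere

/-- If `Re F'(a) = 0` and `Im F'(a) ≠ 0` at an equilibrium `a` of a holomorphic
flow, then `a` is a center or a (stable or unstable) focus. -/
theorem stmt_4 (Ω : Set ℂ) (hΩ : IsOpen Ω) (hconn : IsConnected Ω)
    (F : ℂ → ℂ) (hF : DifferentiableOn ℂ F Ω) (hF0 : ∃ z ∈ Ω, F z ≠ 0)
    (a : ℂ) (ha : a ∈ Ω) (hFa : F a = 0)
    (hre : (deriv F a).re = 0) (him : (deriv F a).im ≠ 0) :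
    ∃ δ > 0,
      -- (a) center: through every point of the punctured δ-ball there is a nonconstant
      -- periodic global solution (hence every maximal solution there is such)
      ((∀ y : ℂ, 0 < dist y a → dist y a < δ →
        ∃ γ : ℝ → ℂ, IsSolOn F Ω univ γ ∧ γ 0 = y ∧
          (∃ T > 0, ∀ t : ℝ, γ (t + T) = γ t) ∧ (∃ t s : ℝ, γ t ≠ γ s)) ∨
      -- (b) stable focus
      (∀ γ : ℝ → ℂ, IsSolOn F Ω (Ici 0) γ → 0 < dist (γ 0) a → dist (γ 0) a < δ →
        Tendsto γ atTop (nhds a) ∧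
        ∀ θ : ℝ → ℝ, ContinuousOn θ (Ici 0) →
          (∀ t ∈ Ici (0 : ℝ), γ t - a =
            ((‖γ t - a‖ : ℝ) : ℂ) * Complex.exp ((θ t : ℂ) * Complex.I)) →
          Tendsto (fun t => |θ t|) atTop atTop) ∨
      -- (c) unstable focus
      (∀ γ : ℝ → ℂ, IsSolOn F Ω (Iic 0) γ → 0 < dist (γ 0) a → dist (γ 0) a < δ →
        Tendsto γ atBot (nhds a) ∧
        ∀ θ : ℝ → ℝ, ContinuousOn θ (Iic 0) →
          (∀ t ∈ Iic (0 : ℝ), γ t - a =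
            ((‖γ t - a‖ : ℝ) : ℂ) * Complex.exp ((θ t : ℂ) * Complex.I)) →
          Tendsto (fun t => |θ t|) atBot atTop)) :=
  stmt_4_general Ω hΩ F hF a ha hFa hre him
end

section
/- Let Ω ⊆ ℂ be open and connected, F holomorphic on Ω with F ≢ 0, and a ∈ Ω an equilibrium with F′(a) ≠ 0. Then a cannot be a saddle: there exists δ₀ > 0 such that for every δ ∈ (0, δ₀] there exist a point y with 0 < |y − a| < δ and a solution γ of ẋ = F(x) with γ(0) = y, defined on [0,∞) or on (−∞,0], whose image is contained in { x : |x − a| < δ }. -/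
open Set Filter Topology

/-!
Near a simple zero `a` of `F` with `F'(a) = c`, there is a holomorphic coordinate `ψ`, `ψ(a) = 0`,
with `F ψ' = c ψ` (Koenigs linearization): `ψ(z) = (z - a) exp G(z)` where `G` is a primitive of
the holomorphic function `c / F - 1 / (z - a)`. In this coordinate the flow is `w ↦ w e^{ct}`,
so the orbit of any point close enough to `a` stays close to `a` in forward time if
`Re c ≤ 0`, and in backward time if `Re c ≥ 0`.
-/

open Metric Complex

/-- `ψ` maps solutions of `ẋ = F x` in `U` to solutions of `ẇ = c w`. -/
def IsLinearizingCoord (F : ℂ → ℂ) (c : ℂ) (U : Set ℂ) (ψ : ℂ → ℂ) : Prop :=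
  ∀ z ∈ U, DifferentiableAt ℂ ψ z ∧ deriv ψ z ≠ 0 ∧ F z * deriv ψ z = c * ψ z

theorem IsLinearizingCoord.mono {F ψ : ℂ → ℂ} {c : ℂ} {U V : Set ℂ}
    (hψ : IsLinearizingCoord F c V ψ) (hUV : U ⊆ V) : IsLinearizingCoord F c U ψ :=
  fun z hz => hψ z (hUV hz)

theorem exists_isLinearizingCoord_ball {F : ℂ → ℂ} {a : ℂ} {r : ℝ} (hr : 0 < r)
    (hF : DifferentiableOn ℂ F (ball a r)) (hFa : F a = 0)
    (hzero : ∀ z ∈ ball a r, z ≠ a → F z ≠ 0) (hne : deriv F a ≠ 0) :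
    ∃ ψ : ℂ → ℂ, ψ a = 0 ∧ IsLinearizingCoord F (deriv F a) (ball a r) ψ := by
  set k := dslope F a
  have hFk : ∀ z, F z = (z - a) * k z := fun z => by
    simpa [hFa] using (sub_smul_dslope F a z).symm
  have hk : DifferentiableOn ℂ k (ball a r) :=
    (Complex.differentiableOn_dslope (ball_mem_nhds a hr)).2 hF
  have hka : k a = deriv F a := dslope_same F a
  have hk0 : ∀ z ∈ ball a r, k z ≠ 0 := by
    intro z hz
    rcases eq_or_ne z a with rfl | hza
    · rwa [hka]
    · exact right_ne_zero_of_mul (hFk z ▸ hzero z hz hza)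
  set h : ℂ → ℂ := fun z => deriv F a / k z
  have hh : DifferentiableOn ℂ h (ball a r) := (differentiableOn_const _).div hk hk0
  obtain ⟨G, hG⟩ := ((Complex.differentiableOn_dslope (ball_mem_nhds a hr)).2 hh).isExactOn_ball
  have hψ : ∀ z ∈ ball a r,
      HasDerivAt (fun z => (z - a) * exp (G z)) (exp (G z) * h z) z := by
    intro z hz
    have hslope : (z - a) * dslope h a z = h z - 1 := by
      simpa [h, hka, div_self hne] using sub_smul_dslope h a z
    refine (((hasDerivAt_id' z).sub_const a).mul (hG z hz).cexp).congr_deriv ?_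
    linear_combination exp (G z) * hslope
  refine ⟨fun z => (z - a) * exp (G z), by simp, fun z hz => ?_⟩
  rw [(hψ z hz).deriv]
  refine ⟨(hψ z hz).differentiableAt,
    mul_ne_zero (exp_ne_zero _) (div_ne_zero hne (hk0 z hz)), ?_⟩
  rw [hFk z]
  simp only [h]
  field_simp [hk0 z hz]

theorem exists_openPartialHomeomorph_of_deriv_ne_zero {ψ : ℂ → ℂ} {U : Set ℂ} {a : ℂ}
    (hψ : DifferentiableOn ℂ ψ U) (hU : IsOpen U) (ha : a ∈ U) (hψa : deriv ψ a ≠ 0) :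
    ∃ e : OpenPartialHomeomorph ℂ ℂ, ⇑e = ψ ∧ a ∈ e.source ∧ e.source ⊆ U := by
  have hequiv :=
    (hψ.analyticAt (hU.mem_nhds ha)).hasStrictDerivAt.hasStrictFDerivAt_equiv hψa
  exact ⟨(hequiv.toOpenPartialHomeomorph ψ).restrOpen U hU, rfl,
    ⟨hequiv.mem_toOpenPartialHomeomorph_source, ha⟩, inter_subset_right⟩

theorem norm_mul_exp_ofReal_mul_le (w₀ c : ℂ) {t : ℝ} (h : t * c.re ≤ 0) :
    ‖w₀ * exp (t * c)‖ ≤ ‖w₀‖ := by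
  rw [norm_mul, norm_exp, re_ofReal_mul]
  exact mul_le_of_le_one_right (norm_nonneg _) (Real.exp_le_one_iff.2 h)

namespace IsLinearizingCoord

variable {F : ℂ → ℂ} {c : ℂ} {e : OpenPartialHomeomorph ℂ ℂ}

theorem hasDerivAt_symm_comp_exp (he : IsLinearizingCoord F c e.source e) (w₀ : ℂ) {t : ℝ}
    (ht : w₀ * exp (t * c) ∈ e.target) :
    HasDerivAt (fun s : ℝ => e.symm (w₀ * exp (s * c)))
      (F (e.symm (w₀ * exp (t * c)))) t := by
  obtain ⟨hdiff, hderiv, hconj⟩ := he _ (e.map_target ht)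
  have hsymm := e.hasDerivAt_symm ht hderiv hdiff.hasDerivAt
  have hlin : HasDerivAt (fun s : ℂ => w₀ * exp (s * c)) (w₀ * (exp (t * c) * c)) t :=
    ((hasDerivAt_mul_const c).cexp).const_mul w₀
  refine (hsymm.comp (t : ℂ) hlin).comp_ofReal.congr_deriv ?_
  rw [e.right_inv ht] at hconj
  rw [eq_comm, eq_inv_mul_iff_mul_eq₀ hderiv]
  linear_combination hconj

theorem isSolOn_symm_comp_exp {Ω : Set ℂ} (he : IsLinearizingCoord F c e.source e)
    (hΩ : e.source ⊆ Ω) (w₀ : ℂ) {s : Set ℝ}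
    (hs : ∀ t ∈ s, w₀ * exp (t * c) ∈ e.target) :
    IsSolOn F Ω s (fun t => e.symm (w₀ * exp (t * c))) :=
  fun t ht => ⟨hΩ (e.map_target (hs t ht)),
    (he.hasDerivAt_symm_comp_exp w₀ (hs t ht)).hasDerivWithinAt⟩

theorem exists_orbit_stays_near {Ω : Set ℂ} {a : ℂ} (he : IsLinearizingCoord F c e.source e)
    (hΩ : e.source ⊆ Ω) (ha : a ∈ e.source) (hea : e a = 0) {δ : ℝ} (hδ : 0 < δ) :
    ∃ y : ℂ, 0 < dist y a ∧ dist y a < δ ∧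
      ∀ s : Set ℝ, (∀ t ∈ s, t * c.re ≤ 0) →
      ∃ γ : ℝ → ℂ, IsSolOn F Ω s γ ∧ γ 0 = y ∧ ∀ t ∈ s, dist (γ t) a < δ := by
  have hnhds : e.target ∩ e.symm ⁻¹' ball a δ ∈ 𝓝 (e a) :=
    inter_mem (e.open_target.mem_nhds (e.map_source ha))
      (e.tendsto_symm ha (ball_mem_nhds a hδ))
  obtain ⟨ε, hε, hεsub⟩ := Metric.mem_nhds_iff.1 hnhds
  rw [hea] at hεsub
  set w₀ : ℂ := ((ε / 2 : ℝ) : ℂ)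
  have hw₀ : ‖w₀‖ < ε := by
    rw [norm_real, Real.norm_of_nonneg (by positivity)]
    linarith
  have hnear : ∀ w : ℂ, ‖w‖ ≤ ‖w₀‖ → w ∈ e.target ∧ e.symm w ∈ ball a δ :=
    fun w hw => hεsub (mem_ball_zero_iff.2 (hw.trans_lt hw₀))
  have hsymm0 : e.symm 0 = a := hea ▸ e.left_inv ha
  have hya : e.symm w₀ ≠ a := by
    intro h
    have hw₀0 : w₀ ≠ 0 := ofReal_ne_zero.2 (by positivity)
    exact hw₀0 <|
      e.symm.injOn (hnear w₀ le_rfl).1 (hea ▸ e.map_source ha) (h.trans hsymm0.symm)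
  refine ⟨e.symm w₀, dist_pos.2 hya, (hnear w₀ le_rfl).2, fun s hs => ?_⟩
  have hbound : ∀ t ∈ s, ‖w₀ * exp (t * c)‖ ≤ ‖w₀‖ := fun t ht =>
    norm_mul_exp_ofReal_mul_le w₀ c (hs t ht)
  exact ⟨_, he.isSolOn_symm_comp_exp hΩ w₀ fun t ht => (hnear _ (hbound t ht)).1, by simp,
    fun t ht => (hnear _ (hbound t ht)).2⟩

end IsLinearizingCoord

theorem stmt_5_general (Ω : Set ℂ) (hΩ : IsOpen Ω)
    (F : ℂ → ℂ) (hF : DifferentiableOn ℂ F Ω)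
    (a : ℂ) (ha : a ∈ Ω) (hFa : F a = 0) (hne : deriv F a ≠ 0) :
    ∃ δ₀ > 0, ∀ δ : ℝ, 0 < δ → δ ≤ δ₀ →
      ∃ y : ℂ, 0 < dist y a ∧ dist y a < δ ∧
        ((∃ γ : ℝ → ℂ, IsSolOn F Ω (Ici 0) γ ∧ γ 0 = y ∧
            ∀ t ∈ Ici (0 : ℝ), dist (γ t) a < δ) ∨
         (∃ γ : ℝ → ℂ, IsSolOn F Ω (Iic 0) γ ∧ γ 0 = y ∧
            ∀ t ∈ Iic (0 : ℝ), dist (γ t) a < δ)) := by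
  have hFderiv : HasDerivAt F (deriv F a) a := (hF.differentiableAt (hΩ.mem_nhds ha)).hasDerivAt
  obtain ⟨r, hr, hball⟩ : ∃ r > 0, ∀ z ∈ ball a r, z ∈ Ω ∧ (z ≠ a → F z ≠ 0) :=
    Metric.eventually_nhds_iff_ball.1 <| Filter.Eventually.and (hΩ.mem_nhds ha)
      (eventually_nhdsWithin_iff.1 (hFderiv.eventually_ne hne))
  have hrΩ : ball a r ⊆ Ω := fun z hz => (hball z hz).1
  obtain ⟨ψ, hψa, hψ⟩ :=
    exists_isLinearizingCoord_ball hr (hF.mono hrΩ) hFa (fun z hz => (hball z hz).2) hne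
  obtain ⟨e, rfl, hae, hsrc⟩ := exists_openPartialHomeomorph_of_deriv_ne_zero
    (fun z hz => (hψ z hz).1.differentiableWithinAt) isOpen_ball (mem_ball_self hr)
    (hψ a (mem_ball_self hr)).2.1
  refine ⟨1, one_pos, fun δ hδ _ => ?_⟩
  obtain ⟨y, hy0, hyδ, horbit⟩ :=
    (hψ.mono hsrc).exists_orbit_stays_near (hsrc.trans hrΩ) hae hψa hδ
  refine ⟨y, hy0, hyδ, ?_⟩
  rcases le_total (deriv F a).re 0 with hc | hc
  · exact Or.inl (horbit _ fun t ht => mul_nonpos_of_nonneg_of_nonpos ht hc)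
  · exact Or.inr (horbit _ fun t ht => mul_nonpos_of_nonpos_of_nonneg ht hc)

/-- An equilibrium `a` with `F'(a) ≠ 0` of a holomorphic flow cannot be a
saddle: for all small `δ`, some orbit starting in the punctured `δ`-ball stays in the
`δ`-ball for all forward times or for all backward times. -/
theorem stmt_5 (Ω : Set ℂ) (hΩ : IsOpen Ω) (hconn : IsConnected Ω)
    (F : ℂ → ℂ) (hF : DifferentiableOn ℂ F Ω) (hF0 : ∃ z ∈ Ω, F z ≠ 0)
    (a : ℂ) (ha : a ∈ Ω) (hFa : F a = 0) (hne : deriv F a ≠ 0) :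
    ∃ δ₀ > 0, ∀ δ : ℝ, 0 < δ → δ ≤ δ₀ →
      ∃ y : ℂ, 0 < dist y a ∧ dist y a < δ ∧
        ((∃ γ : ℝ → ℂ, IsSolOn F Ω (Ici 0) γ ∧ γ 0 = y ∧
            ∀ t ∈ Ici (0 : ℝ), dist (γ t) a < δ) ∨
         (∃ γ : ℝ → ℂ, IsSolOn F Ω (Iic 0) γ ∧ γ 0 = y ∧
            ∀ t ∈ Iic (0 : ℝ), dist (γ t) a < δ)) :=
  stmt_5_general Ω hΩ F hF a ha hFa hne
end

section
/- Let Ω ⊆ ℂ be open and connected, F holomorphic on Ω with F ≢ 0, and a ∈ Ω an equilibrium of order m ≥ 2. If γ : [0,∞) → Ω is a solution of ẋ = F(x) with γ(t) ≠ a for all t and γ(t) → a as t → ∞, then there exists θ₀ ∈ 𝓔(F,m) such that (γ(t) − a)/|γ(t) − a| → e^{iθ₀} as t → ∞; that is, every orbit tending to a does so in a definite direction belonging to 𝓔(F,m). -/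
open Set Filter Topology

/-- The set `𝓔(F,m)` of candidate definite directions at `a`. -/
noncomputable def dirSet (F : ℂ → ℂ) (m : ℕ) (a : ℂ) : Set ℝ :=
  { θ : ℝ | ∃ ℓ : ℤ, θ = toIcoMod Real.two_pi_pos 0
      (((ℓ : ℝ) * Real.pi - (iteratedDeriv m F a).arg) / ((m : ℝ) - 1)) }

/-!
Near `a` write `F z = (z - a) ^ m * g z`, where `g = (swap dslope a)^[m] F` is continuous at `a`
and `m! * g a = A := F⁽ᵐ⁾(a) ≠ 0`. Along the orbit, `w = γ - a` satisfies
`d/dt w^(-(m-1)) = -(m-1) g(γ) → -(m-1) g(a)`, so `w^(-(m-1)) / t` has the same limit and the unit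
vector `δ = w / ‖w‖` satisfies `δ^(m-1) → -‖A‖/A = exp((π - arg A) i)`. The `(m-1)`-th roots of
this limit are isolated and `δ` is continuous, so `δ` converges to one of them, `exp(θ₀ i)` with
`(m-1) θ₀ ≡ π - arg A (mod 2π)`, i.e. `θ₀ ∈ 𝓔(F, m)`.
-/

open Function Complex

section IteratedDslope

variable {𝕜 : Type*} [NontriviallyNormedField 𝕜] {f : 𝕜 → 𝕜} {a : 𝕜}

theorem AnalyticAt.continuousAt_iterate_dslope (hf : AnalyticAt 𝕜 f a) (k : ℕ) :
    ContinuousAt ((swap dslope a)^[k] f) a :=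
  let ⟨_, hp⟩ := hf
  (hp.has_fpower_series_iterate_dslope_fslope k).continuousAt

variable [CompleteSpace 𝕜] [CharZero 𝕜]

theorem AnalyticAt.iterate_dslope_apply_self (hf : AnalyticAt 𝕜 f a) (k : ℕ) :
    (swap dslope a)^[k] f a = iteratedDeriv k f a / k.factorial := by
  rw [← (hf.hasFPowerSeriesAt.has_fpower_series_iterate_dslope_fslope k).coeff_zero 1,
    ← FormalMultilinearSeries.coeff, FormalMultilinearSeries.coeff_iterate_fslope, zero_add,
    FormalMultilinearSeries.coeff_ofScalars]

theorem AnalyticAt.eq_pow_mul_iterate_dslope (hf : AnalyticAt 𝕜 f a) {m : ℕ}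
    (hlow : ∀ k < m, iteratedDeriv k f a = 0) (z : 𝕜) :
    f z = (z - a) ^ m * (swap dslope a)^[m] f z :=
  (pow_sub_smul_iterate_dslope_of_zero m (fun k hk => by
    rw [hf.iterate_dslope_apply_self, hlow k hk, zero_div]) z).symm

end IteratedDslope

section IsSolOn

variable {F : ℂ → ℂ} {Ω : Set ℂ} {s : Set ℝ} {γ : ℝ → ℂ}

theorem IsSolOn.continuousOn (hγ : IsSolOn F Ω s γ) : ContinuousOn γ s :=
  fun t ht => (hγ t ht).2.continuousWithinAt

theorem IsSolOn.hasDerivAt (hγ : IsSolOn F Ω s γ) {t : ℝ} (hs : s ∈ 𝓝 t) :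
    HasDerivAt γ (F (γ t)) t :=
  (hγ t (mem_of_mem_nhds hs)).2.hasDerivAt hs

end IsSolOn

section DerivAtTop

variable {E : Type*} [NormedAddCommGroup E] [NormedSpace ℝ E] {u v : ℝ → E}

theorem tendsto_inv_smul_of_tendsto_deriv_zero (hu : ∀ᶠ t in atTop, HasDerivAt u (v t) t)
    (hv : Tendsto v atTop (𝓝 0)) : Tendsto (fun t => t⁻¹ • u t) atTop (𝓝 0) := by
  rw [Metric.tendsto_nhds]
  intro ε hε
  have hsmall : ∀ᶠ t in atTop, ‖v t‖ ≤ ε / 2 :=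
    (tendsto_zero_iff_norm_tendsto_zero.mp hv).eventually (ge_mem_nhds (half_pos hε))
  obtain ⟨T, hT⟩ := eventually_atTop.mp (hu.and hsmall)
  have hmvt : ∀ t ≥ T, ‖u t - u T‖ ≤ ε / 2 * (t - T) := fun t ht =>
    norm_image_sub_le_of_norm_deriv_le_segment'
      (fun x hx => (hT x hx.1).1.hasDerivWithinAt) (fun x hx => (hT x hx.1).2) t ⟨ht, le_rfl⟩
  filter_upwards [eventually_ge_atTop T, eventually_gt_atTop 0,
    eventually_gt_atTop (2 * (‖u T‖ - ε / 2 * T) / ε)] with t hTt ht0 htc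
  rw [dist_zero_right, norm_smul, norm_inv, Real.norm_of_nonneg ht0.le, inv_mul_lt_iff₀ ht0]
  rw [div_lt_iff₀ hε] at htc
  linarith [norm_le_norm_add_norm_sub' (u t) (u T), hmvt t hTt, norm_sub_rev (u t) (u T)]

theorem tendsto_inv_smul_of_tendsto_deriv {L : E} (hu : ∀ᶠ t in atTop, HasDerivAt u (v t) t)
    (hv : Tendsto v atTop (𝓝 L)) : Tendsto (fun t => t⁻¹ • u t) atTop (𝓝 L) := by
  have hf : ∀ᶠ t in atTop, HasDerivAt (fun t => u t - t • L) (v t - L) t := by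
    filter_upwards [hu] with t ht
    simpa only [one_smul] using ht.fun_sub ((hasDerivAt_id' t).smul_const L)
  have := (tendsto_inv_smul_of_tendsto_deriv_zero hf (by simpa using hv.sub_const L)).add_const L
  rw [zero_add] at this
  refine this.congr' ?_
  filter_upwards [eventually_ne_atTop 0] with t ht
  simp [smul_sub, smul_smul, inv_mul_cancel₀ ht]

end DerivAtTop

theorem tendsto_inv_smul_zpow_sub_of_eq_pow_mul {F g : ℂ → ℂ} {a : ℂ} {n : ℕ} {γ : ℝ → ℂ}
    (hFg : ∀ᶠ z in 𝓝 a, F z = (z - a) ^ (n + 1) * g z) (hg : ContinuousAt g a)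
    (hγ : ∀ᶠ t in atTop, HasDerivAt γ (F (γ t)) t) (hne : ∀ᶠ t in atTop, γ t ≠ a)
    (hlim : Tendsto γ atTop (𝓝 a)) :
    Tendsto (fun t : ℝ => t⁻¹ • (γ t - a) ^ (-n : ℤ)) atTop (𝓝 (-n * g a)) := by
  refine tendsto_inv_smul_of_tendsto_deriv (v := fun t => -n * g (γ t)) ?_
    ((hg.tendsto.comp hlim).const_mul _)
  filter_upwards [hγ, hne, hlim.eventually hFg] with t hγt hnet hFt
  have hw : γ t - a ≠ 0 := sub_ne_zero.mpr hnet
  refine ((hasDerivAt_zpow (-n) _ (Or.inl hw)).comp t (hγt.sub_const a)).congr_deriv ?_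
  rw [hFt, zpow_sub_one₀ hw, zpow_neg, zpow_natCast]
  field_simp
  push_cast
  ring

theorem Filter.Tendsto.div_norm {α : Type*} {l : Filter α} {f : α → ℂ} {L : ℂ}
    (hf : Tendsto f l (𝓝 L)) (hL : L ≠ 0) : Tendsto (fun x => f x / ‖f x‖) l (𝓝 (L / ‖L‖)) :=
  hf.div (continuous_ofReal.tendsto _ |>.comp hf.norm) (by simpa using hL)

theorem ContinuousOn.div_norm {α : Type*} [TopologicalSpace α] {s : Set α} {f : α → ℂ}
    (hf : ContinuousOn f s) (hf0 : ∀ x ∈ s, f x ≠ 0) : ContinuousOn (fun x => f x / ‖f x‖) s :=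
  hf.div (continuous_ofReal.comp_continuousOn hf.norm) fun x hx => by simpa using hf0 x hx

theorem tendsto_pow_div_norm_of_tendsto_inv_smul_zpow {w : ℝ → ℂ} {n : ℕ} {L : ℂ} (hL : L ≠ 0)
    (h : Tendsto (fun t : ℝ => t⁻¹ • w t ^ (-n : ℤ)) atTop (𝓝 L)) :
    Tendsto (fun t => (w t / ‖w t‖) ^ n) atTop (𝓝 (‖L‖ / L)) := by
  have := ((h.div_norm hL).inv₀ (by simpa using hL))
  rw [inv_div] at this
  refine this.congr' ?_
  filter_upwards [eventually_gt_atTop 0] with t ht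
  rw [Complex.real_smul, norm_mul, inv_div, zpow_neg, zpow_natCast, div_pow]
  simp only [ofReal_inv, norm_inv, norm_real, Real.norm_of_nonneg ht.le, norm_pow, ofReal_mul,
    ofReal_pow]
  field_simp
  exact mul_div_mul_left _ _ (ofReal_ne_zero.mpr ht.ne')

theorem exists_tendsto_nhds_of_tendsto_pow {z : ℝ → ℂ} {T : ℝ} (hz : ContinuousOn z (Ici T))
    {n : ℕ} (hn : n ≠ 0) {c : ℂ} (hc : c ≠ 0) (h : Tendsto (fun t => z t ^ n) atTop (𝓝 c)) :
    ∃ ξ, ξ ^ n = c ∧ Tendsto z atTop (𝓝 ξ) := by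
  set root : ℂ → ℂ := fun y => c ^ (n⁻¹ : ℂ) * (y / c) ^ (n⁻¹ : ℂ)
  have root_pow (y : ℂ) : root y ^ n = y := by
    simp only [root, mul_pow, cpow_nat_inv_pow _ hn]
    field_simp
  have root_cont {y : ℂ} (hy : y / c ∈ slitPlane) : ContinuousAt root y :=
    continuousAt_const.mul <|
      (continuousAt_cpow_const hy).comp (f := fun y => y / c) (continuousAt_id.div_const c)
  have hc_slit : c / c ∈ slitPlane := by simp [hc]
  obtain ⟨T', hT'⟩ := eventually_atTop.mp <|
    ((h.div_const c).eventually (isOpen_slitPlane.mem_nhds hc_slit)).and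
      ((h.eventually_ne hc).and (eventually_ge_atTop T))
  -- `z t` differs from the continuous branch `root (z t ^ n)` by a continuous `n`-th root of unity
  set ω : ℝ → ℂ := fun t => z t / root (z t ^ n)
  have hroot_ne {t : ℝ} (ht : T' ≤ t) : root (z t ^ n) ≠ 0 := fun h0 =>
    (hT' t ht).2.1 (by rw [← root_pow (z t ^ n), h0, zero_pow hn])
  have hω_pow : MapsTo ω (Ici T') {ζ | ζ ^ n = 1} := fun t ht => by
    simp only [ω, mem_ofPred_eq, div_pow, root_pow]
    exact div_self (hT' t ht).2.1
  have hz' : ContinuousOn z (Ici T') := hz.mono (Ici_subset_Ici.mpr (hT' T' le_rfl).2.2)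
  have hω_cont : ContinuousOn ω (Ici T') := fun t ht =>
    (hz' t ht).div ((root_cont (hT' t ht).1).comp_continuousWithinAt (f := fun t => z t ^ n)
      ((hz' t ht).pow n)) (hroot_ne ht)
  have hfin : {ζ : ℂ | ζ ^ n = 1}.Finite :=
    (Polynomial.nthRoots n (1 : ℂ)).toFinset.finite_toSet.subset fun ζ hζ => by
      simpa [Polynomial.mem_nthRoots (Nat.pos_of_ne_zero hn)] using hζ
  have hω_const {t : ℝ} (ht : T' ≤ t) : ω t = ω T' :=
    isPreconnected_Ici.constant_of_mapsTo hfin.isDiscrete hω_cont hω_pow ht self_mem_Ici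
  refine ⟨ω T' * root c, by rw [mul_pow, hω_pow self_mem_Ici, root_pow, one_mul], ?_⟩
  refine (((root_cont hc_slit).tendsto.comp h).const_mul (ω T')).congr' ?_
  filter_upwards [eventually_ge_atTop T'] with t ht
  rw [comp_apply, ← hω_const ht, div_mul_cancel₀ _ (hroot_ne ht)]

theorem exp_toIcoMod_two_pi_mul_I (x : ℝ) :
    exp (toIcoMod Real.two_pi_pos 0 x * I) = exp (x * I) := by
  simp only [← Circle.coe_exp, toIcoMod, Circle.periodic_exp.sub_zsmul_eq]

theorem neg_norm_div_eq_exp_mul_I {A : ℂ} (hA : A ≠ 0) :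
    -(‖A‖ / A) = exp ((Real.pi - arg A : ℝ) * I) := by
  have hA' : (‖A‖ : ℂ) ≠ 0 := by simpa using hA
  rw [ofReal_sub, sub_mul, exp_sub, exp_pi_mul_I]
  nth_rewrite 2 [← norm_mul_exp_arg_mul_I A]
  field_simp

theorem exists_mem_dirSet_exp_mul_I_eq {F : ℂ → ℂ} {a : ℂ} {n : ℕ} (hn : n ≠ 0)
    (hA : iteratedDeriv (n + 1) F a ≠ 0) {ξ : ℂ}
    (hξ : ξ ^ n = -(‖iteratedDeriv (n + 1) F a‖ / iteratedDeriv (n + 1) F a)) :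
    ∃ θ₀ ∈ dirSet F (n + 1) a, exp (θ₀ * I) = ξ := by
  set A := iteratedDeriv (n + 1) F a
  rw [neg_norm_div_eq_exp_mul_I hA] at hξ
  have hnorm : ‖ξ‖ = 1 := by
    rw [← pow_eq_one_iff_of_nonneg (norm_nonneg ξ) hn, ← norm_pow, hξ, norm_exp_ofReal_mul_I]
  have hξ_exp : exp (arg ξ * I) = ξ := by simpa [hnorm] using norm_mul_exp_arg_mul_I ξ
  obtain ⟨k, hk⟩ : ∃ k : ℤ,
      ((n * arg ξ : ℝ) : ℂ) * I = ((Real.pi - arg A : ℝ) : ℂ) * I + k * (2 * Real.pi * I) := by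
    rw [← exp_eq_exp_iff_exists_int, ← hξ]
    nth_rewrite 2 [← hξ_exp]
    rw [← exp_nat_mul]
    push_cast
    ring_nf
  have harg : arg ξ = ((2 * k + 1 : ℤ) * Real.pi - arg A) / ((n + 1 : ℕ) - 1 : ℝ) := by
    have hk' : n * arg ξ = Real.pi - arg A + k * (2 * Real.pi) := by
      simpa using congrArg im hk
    push_cast
    rw [add_sub_cancel_right, eq_div_iff (by exact_mod_cast hn)]
    linarith
  exact ⟨_, ⟨2 * k + 1, rfl⟩, by rw [exp_toIcoMod_two_pi_mul_I, ← harg, hξ_exp]⟩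

theorem stmt_7_general (Ω : Set ℂ) (hΩ : IsOpen Ω)
    (F : ℂ → ℂ) (hF : DifferentiableOn ℂ F Ω)
    (a : ℂ) (ha : a ∈ Ω) (m : ℕ) (hm : 2 ≤ m)
    (hlow : ∀ k < m, iteratedDeriv k F a = 0) (hord : iteratedDeriv m F a ≠ 0)
    (γ : ℝ → ℂ) (hγ : IsSolOn F Ω (Ici 0) γ)
    (hne : ∀ t ∈ Ici (0 : ℝ), γ t ≠ a) (hlim : Tendsto γ atTop (nhds a)) :
    ∃ θ₀ ∈ dirSet F m a,
      Tendsto (fun t => (γ t - a) / ((‖γ t - a‖ : ℝ) : ℂ)) atTop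
        (nhds (Complex.exp ((θ₀ : ℂ) * Complex.I))) := by
  obtain ⟨n, rfl⟩ : ∃ n, m = n + 1 := ⟨m - 1, by omega⟩
  have hn : n ≠ 0 := by omega
  have hFa : AnalyticAt ℂ F a := hF.analyticAt (hΩ.mem_nhds ha)
  set A := iteratedDeriv (n + 1) F a
  set g := (swap dslope a)^[n + 1] F
  have hga : g a = A / (n + 1).factorial := hFa.iterate_dslope_apply_self _
  have hL : -(n : ℂ) * g a ≠ 0 := by simp [hga, hn, hord, Nat.factorial_ne_zero]
  have hL_dir : ‖-(n : ℂ) * g a‖ / (-(n : ℂ) * g a) = -(‖A‖ / A) := by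
    have : ((n + 1).factorial : ℂ) ≠ 0 := by exact_mod_cast Nat.factorial_ne_zero _
    simp only [hga, neg_mul, norm_neg, Complex.norm_mul, RCLike.norm_natCast, Complex.norm_div,
      ofReal_mul, ofReal_natCast, ofReal_div]
    field_simp
  have hrate := tendsto_inv_smul_zpow_sub_of_eq_pow_mul
    (.of_forall (hFa.eq_pow_mul_iterate_dslope hlow)) (hFa.continuousAt_iterate_dslope _)
    ((eventually_gt_atTop 0).mono fun t ht => hγ.hasDerivAt (Ici_mem_nhds ht))
    ((eventually_ge_atTop 0).mono hne) hlim
  have hdir_cont : ContinuousOn (fun t => (γ t - a) / ((‖γ t - a‖ : ℝ) : ℂ)) (Ici 0) :=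
    (hγ.continuousOn.sub continuousOn_const).div_norm fun t ht => sub_ne_zero.mpr (hne t ht)
  obtain ⟨ξ, hξ, hdir⟩ := exists_tendsto_nhds_of_tendsto_pow hdir_cont hn
    (by simpa using hL) (tendsto_pow_div_norm_of_tendsto_inv_smul_zpow hL hrate)
  obtain ⟨θ₀, hθ₀, rfl⟩ := exists_mem_dirSet_exp_mul_I_eq hn hord (hξ.trans hL_dir)
  exact ⟨θ₀, hθ₀, hdir⟩

/-- every orbit of a holomorphic flow tending to an equilibrium `a` of order
`m ≥ 2` does so in a definite direction `θ₀ ∈ 𝓔(F,m)`. -/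
theorem stmt_7 (Ω : Set ℂ) (hΩ : IsOpen Ω) (hconn : IsConnected Ω)
    (F : ℂ → ℂ) (hF : DifferentiableOn ℂ F Ω) (hF0 : ∃ z ∈ Ω, F z ≠ 0)
    (a : ℂ) (ha : a ∈ Ω) (m : ℕ) (hm : 2 ≤ m)
    (hlow : ∀ k < m, iteratedDeriv k F a = 0) (hord : iteratedDeriv m F a ≠ 0)
    (γ : ℝ → ℂ) (hγ : IsSolOn F Ω (Ici 0) γ)
    (hne : ∀ t ∈ Ici (0 : ℝ), γ t ≠ a) (hlim : Tendsto γ atTop (nhds a)) :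
    ∃ θ₀ ∈ dirSet F m a,
      Tendsto (fun t => (γ t - a) / ((‖γ t - a‖ : ℝ) : ℂ)) atTop
        (nhds (Complex.exp ((θ₀ : ℂ) * Complex.I))) :=
  stmt_7_general Ω hΩ F hF a ha m hm hlow hord γ hγ hne hlim
end

section
/- Let Ω ⊆ ℂ be open and connected, F holomorphic on Ω with F ≢ 0, and a ∈ Ω with F(a) = 0. Suppose there exists δ > 0 with the closed δ-ball around a contained in Ω such that for every y with 0 < |y − a| < δ there exists a nonconstant periodic solution γ : ℝ → Ω of ẋ = F(x) with γ(0) = y. Then F′(a) ≠ 0; that is, centers of holomorphic flows have order 1. -/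
/-!
Suppose `F'(a) = 0`, so that `F z = (z - a)^(m+2) G z` with `G a ≠ 0`. With `c = -(m+1) G(a)`,
the function `Φ z = 1 / ((z - a)^(m+1) c)` satisfies `Φ' F = G / G(a)`, so along any orbit
the real part of `Φ` strictly increases while the orbit stays in a small disc around `a`.
Start a periodic orbit at a point `y` of that disc where `Φ y` is a positive real. At a
maximum of the periodic function `t ↦ Re Φ(γ t)` the derivative vanishes, so the orbit is
outside the disc there; but `|Φ|` is smaller outside the disc than at `y`, a contradiction.
Orbits through `y ≠ a` never reach `a` by uniqueness of solutions.
-/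

open Set Filter Topology

open scoped ComplexOrder

theorem AnalyticAt.exists_eventuallyEq_pow_add_two_mul_of_deriv_eq_zero {𝕜 : Type*}
    [NontriviallyNormedField 𝕜] [CharZero 𝕜] [CompleteSpace 𝕜] {f : 𝕜 → 𝕜} {a : 𝕜}
    (hf : AnalyticAt 𝕜 f a) (hfin : analyticOrderAt f a ≠ ⊤) (hfa : f a = 0)
    (hf' : deriv f a = 0) :
    ∃ (m : ℕ) (g : 𝕜 → 𝕜), AnalyticAt 𝕜 g a ∧ g a ≠ 0 ∧
      f =ᶠ[𝓝 a] fun z ↦ (z - a) ^ (m + 2) * g z := by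
  have h2 : ((2 : ℕ) : ℕ∞) ≤ analyticOrderAt f a := by
    rw [natCast_le_analyticOrderAt_iff_iteratedDeriv_eq_zero hf]
    intro i hi
    interval_cases i
    · simpa using hfa
    · simpa using hf'
  obtain ⟨n, hn⟩ := ENat.ne_top_iff_exists.mp hfin
  obtain ⟨m, rfl⟩ : ∃ m, n = m + 2 := ⟨n - 2, by rw [← hn] at h2; norm_cast at h2; omega⟩
  obtain ⟨g, hg, hga, hfg⟩ := (hf.analyticOrderAt_eq_natCast).mp hn.symm
  exact ⟨m, g, hg, hga, hfg⟩

theorem ODE_solution_eq_of_eq_equilibrium {E : Type*} [NormedAddCommGroup E] [NormedSpace ℝ E]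
    {F : E → E} {a : E} {K : NNReal} {s : Set E} (hs : s ∈ 𝓝 a) (hF : LipschitzOnWith K F s)
    (hFa : F a = 0) {γ : ℝ → E} (hγ : ∀ t, HasDerivAt γ (F (γ t)) t) {t₀ : ℝ} (ht₀ : γ t₀ = a)
    (t : ℝ) : γ t = a := by
  have hγc : Continuous γ := continuous_iff_continuousAt.mpr fun t ↦ (hγ t).continuousAt
  have hclopen : IsClopen {t | γ t = a} := by
    refine ⟨isClosed_eq hγc continuous_const, isOpen_iff_mem_nhds.mpr fun t₁ ht₁ ↦ ?_⟩
    have hmem : ∀ᶠ t in 𝓝 t₁, γ t ∈ s := hγc.continuousAt.preimage_mem_nhds (ht₁ ▸ hs)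
    exact ODE_solution_unique_of_eventually (v := fun _ ↦ F) (s := fun _ ↦ s)
      (.of_forall fun _ ↦ hF) (hmem.mono fun t ht ↦ ⟨hγ t, ht⟩)
      (.of_forall fun t ↦ ⟨by simpa [hFa] using hasDerivAt_const t a, mem_of_mem_nhds hs⟩) ht₁
  have huniv := (isClopen_iff.mp hclopen).resolve_left (nonempty_iff_ne_empty.mp ⟨t₀, ht₀⟩)
  exact eq_univ_iff_forall.mp huniv t

theorem Complex.exists_norm_eq_and_pow_mul_pos {n : ℕ} (hn : n ≠ 0) {c : ℂ} (hc : c ≠ 0)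
    {ε : ℝ} (hε : 0 < ε) : ∃ ζ : ℂ, ‖ζ‖ = ε ∧ 0 < ζ ^ n * c := by
  obtain ⟨w, hw⟩ := IsAlgClosed.exists_pow_nat_eq ((‖c‖ : ℂ) / c) (Nat.pos_of_ne_zero hn)
  have hw1 : ‖w‖ = 1 := by
    refine (pow_eq_one_iff_of_nonneg (norm_nonneg w) hn).mp ?_
    rw [← norm_pow, hw, norm_div, Complex.norm_real, norm_norm, div_self (norm_ne_zero_iff.mpr hc)]
  refine ⟨ε * w, by simp [hw1, hε.le], ?_⟩
  rw [mul_pow, mul_assoc, hw, div_mul_cancel₀ _ hc, ← Complex.ofReal_pow, ← Complex.ofReal_mul]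
  exact Complex.zero_lt_real.mpr (by positivity)

theorem Function.Periodic.exists_ge_and_hasDerivAt_eq_zero {ψ ψ' : ℝ → ℝ} {T : ℝ}
    (hp : Function.Periodic ψ T) (hT : T ≠ 0) (hψ : ∀ t, HasDerivAt ψ (ψ' t) t) (s : ℝ) :
    ∃ t, ψ s ≤ ψ t ∧ ψ' t = 0 := by
  have hc : Continuous ψ := continuous_iff_continuousAt.mpr fun t ↦ (hψ t).continuousAt
  obtain ⟨_, ⟨t, rfl⟩, hmax⟩ :=
    (hp.compact_of_continuous hT hc).exists_isGreatest (range_nonempty ψ)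
  have hloc : IsLocalMax ψ t := .of_forall fun u ↦ hmax ⟨u, rfl⟩
  exact ⟨t, hmax ⟨s, rfl⟩, hloc.hasDerivAt_eq_zero (hψ t)⟩

theorem hasDerivAt_inv_sub_pow_mul {𝕜 : Type*} [NontriviallyNormedField 𝕜] {a c z : 𝕜} {n : ℕ}
    (h : (z - a) ^ (n + 1) * c ≠ 0) :
    HasDerivAt (fun z ↦ ((z - a) ^ (n + 1) * c)⁻¹)
      (-((n + 1) * (z - a) ^ n * c) / ((z - a) ^ (n + 1) * c) ^ 2) z := by
  simpa using ((((hasDerivAt_id' z).sub_const a).fun_pow (n + 1)).mul_const c).fun_inv h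

theorem not_periodic_of_hasDerivAt_of_eq_pow_add_two_mul {F G : ℂ → ℂ} {a : ℂ} {m : ℕ} {r : ℝ}
    (hGa : G a ≠ 0)
    (hball : ∀ z, dist z a < r → F z = (z - a) ^ (m + 2) * G z ∧ 0 < (G z / G a).re)
    {γ : ℝ → ℂ} (hγ : ∀ t, HasDerivAt γ (F (γ t)) t) (hγa : ∀ t, γ t ≠ a)
    (hγ0 : dist (γ 0) a < r) (hγ0c : 0 < (γ 0 - a) ^ (m + 1) * (-(m + 1) * G a))
    {T : ℝ} (hT : T ≠ 0) : ¬ Function.Periodic γ T := by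
  intro hper
  set c : ℂ := -(m + 1) * G a
  have hc : c ≠ 0 := mul_ne_zero (neg_ne_zero.mpr (Nat.cast_add_one_ne_zero m)) hGa
  set Φ : ℂ → ℂ := fun z ↦ ((z - a) ^ (m + 1) * c)⁻¹
  set Φ' : ℂ → ℂ := fun z ↦ -((m + 1) * (z - a) ^ m * c) / ((z - a) ^ (m + 1) * c) ^ 2
  have hΦ : ∀ z ≠ a, HasDerivAt Φ (Φ' z) z := fun z hz ↦
    hasDerivAt_inv_sub_pow_mul (mul_ne_zero (pow_ne_zero _ (sub_ne_zero.mpr hz)) hc)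
  have hΦF : ∀ z, dist z a < r → z ≠ a → Φ' z * F z = G z / G a := fun z hz hza ↦ by
    have : z - a ≠ 0 := sub_ne_zero.mpr hza
    rw [(hball z hz).1]
    simp only [Φ', c]
    field_simp
    ring
  have hnormΦ : ∀ z, ‖Φ z‖ = (‖z - a‖ ^ (m + 1) * ‖c‖)⁻¹ := by simp [Φ]
  set ψ : ℝ → ℝ := fun t ↦ (Φ (γ t)).re
  have hψ : ∀ t, HasDerivAt ψ (Φ' (γ t) * F (γ t)).re t := fun t ↦
    Complex.reCLM.hasFDerivAt.comp_hasDerivAt t ((hΦ _ (hγa t)).comp t (hγ t))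
  obtain ⟨t₀, hle, hzero⟩ :=
    (hper.comp fun z ↦ (Φ z).re).exists_ge_and_hasDerivAt_eq_zero hT hψ 0
  replace hle : ψ 0 ≤ ψ t₀ := hle
  have hfar : r ≤ dist (γ t₀) a := by
    by_contra! h
    rw [hΦF _ h (hγa t₀)] at hzero
    linarith [(hball _ h).2]
  have hψ0 : ψ 0 = ‖Φ (γ 0)‖ := Complex.re_eq_norm.mpr (inv_pos.mpr hγ0c).le
  have hlt : ‖Φ (γ t₀)‖ < ‖Φ (γ 0)‖ := by
    rw [hnormΦ, hnormΦ, ← dist_eq_norm, ← dist_eq_norm]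
    have : 0 < dist (γ 0) a := dist_pos.mpr (hγa 0)
    gcongr
    linarith
  linarith [Complex.re_le_norm (Φ (γ t₀))]

/-- if through every point of a punctured `δ`-ball around an equilibrium `a`
of a holomorphic flow there is a nonconstant periodic global solution, then `F'(a) ≠ 0`;
i.e. centers of holomorphic flows have order 1. -/
theorem stmt_14 (Ω : Set ℂ) (hΩ : IsOpen Ω) (hconn : IsConnected Ω)
    (F : ℂ → ℂ) (hF : DifferentiableOn ℂ F Ω) (hF0 : ∃ z ∈ Ω, F z ≠ 0)
    (a : ℂ) (ha : a ∈ Ω) (hFa : F a = 0)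
    (hyp : ∃ δ > 0, Metric.closedBall a δ ⊆ Ω ∧
      ∀ y : ℂ, 0 < dist y a → dist y a < δ →
        ∃ γ : ℝ → ℂ, IsSolOn F Ω univ γ ∧ γ 0 = y ∧
          (∃ T > 0, ∀ t : ℝ, γ (t + T) = γ t) ∧ (∃ t s : ℝ, γ t ≠ γ s)) :
    deriv F a ≠ 0 := by
  intro hd
  obtain ⟨δ, hδ, -, hsol⟩ := hyp
  have hFan : AnalyticOnNhd ℂ F Ω := hF.analyticOnNhd hΩ
  have hfin : analyticOrderAt F a ≠ ⊤ := by
    obtain ⟨z, hz, hFz⟩ := hF0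
    refine (hFan.exists_analyticOrderAt_ne_top_iff_forall hconn).mp ⟨⟨z, hz⟩, ?_⟩ ⟨a, ha⟩
    simp [analyticOrderAt_eq_zero.mpr (Or.inr hFz)]
  obtain ⟨m, G, hG, hGa, hFG⟩ :=
    (hFan a ha).exists_eventuallyEq_pow_add_two_mul_of_deriv_eq_zero hfin hFa hd
  have hGpos : ∀ᶠ z in 𝓝 a, 0 < (G z / G a).re :=
    (hG.continuousAt.div_const _).eventually
      ((isOpen_lt continuous_const Complex.continuous_re).mem_nhds (by simp [hGa]))
  obtain ⟨r, hr, hball⟩ := Metric.eventually_nhds_iff.mp (hFG.and hGpos)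
  obtain ⟨ζ, hζ, hζc⟩ := Complex.exists_norm_eq_and_pow_mul_pos (Nat.succ_ne_zero m)
    (mul_ne_zero (neg_ne_zero.mpr (Nat.cast_add_one_ne_zero m)) hGa) (half_pos (lt_min hr hδ))
  have hdist : dist (a + ζ) a = min r δ / 2 := by simp [hζ]
  obtain ⟨γ, hγ, hγ0, ⟨T, hT, hper⟩, t, s, hts⟩ :=
    hsol (a + ζ) (by linarith [lt_min hr hδ]) (by linarith [min_le_right r δ])
  have hγ' : ∀ t, HasDerivAt γ (F (γ t)) t := fun t ↦ hasDerivWithinAt_univ.mp (hγ t trivial).2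
  obtain ⟨K, U, hU, hK⟩ := ((hFan a ha).contDiffAt (n := 1)).exists_lipschitzOnWith
  have hγa : ∀ t₀, γ t₀ ≠ a := fun t₀ h ↦ hts <|
    (ODE_solution_eq_of_eq_equilibrium hU hK hFa hγ' h t).trans
      (ODE_solution_eq_of_eq_equilibrium hU hK hFa hγ' h s).symm
  refine not_periodic_of_hasDerivAt_of_eq_pow_add_two_mul hGa (fun z hz ↦ hball hz) hγ' hγa
    ?_ (by simpa [hγ0] using hζc) hT.ne' hper
  rw [hγ0, hdist]
  linarith [min_le_left r δ]
end

section
/- Let Ω ⊆ ℂ be open and connected, F holomorphic on Ω with F ≢ 0, and a ∈ Ω an equilibrium with Re F′(a) < 0. If γ : [0,∞) → Ω is a solution of ẋ = F(x) such that a belongs to the positive limit set of γ, i.e. there exists a sequence t_k → ∞ with γ(t_k) → a, then γ(t) → a as t → ∞; in particular the positive limit set of γ equals {a}. (Analogously, if Re F′(a) > 0 and a is in the negative limit set of a solution γ : (−∞,0] → Ω, then γ(t) → a as t → −∞.) -/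
/-!
Near a zero `a` of `F` with `Re F'(a) < 0` the linearisation gives
`⟪z - a, F z⟫ ≤ (Re F'(a) / 2) ‖z - a‖² < 0` for `z ≠ a`, so `‖γ t - a‖²` strictly decreases
whenever a solution meets a small sphere around `a`: every small closed ball around `a` is
forward invariant. A solution that enters such a ball at arbitrarily late times therefore stays
in it, which gives convergence. The backward statement is the forward one for `-F` and the
reversed solution `t ↦ γ (-t)`.
-/

open Set Filter Topology

open Metric
open scoped InnerProductSpace

theorem Complex.real_inner_self_mul_s19 (v d : ℂ) : ⟪v, v * d⟫_ℝ = ‖v‖ ^ 2 * d.re := by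
  rw [Complex.inner, mul_comm v d, mul_assoc, Complex.mul_conj, mul_comm, Complex.re_ofReal_mul,
    Complex.normSq_eq_norm_sq]

theorem eventually_inner_sub_apply_neg_of_hasDerivAt {F : ℂ → ℂ} {a d : ℂ}
    (hd : HasDerivAt F d a) (hFa : F a = 0) (hre : d.re < 0) :
    ∀ᶠ z in 𝓝[≠] a, ⟪z - a, F z⟫_ℝ < 0 := by
  have hlin : ∀ᶠ z in 𝓝 a, ‖F z - (z - a) * d‖ ≤ -d.re / 2 * ‖z - a‖ := by
    simpa [hFa, mul_comm] using
      (hasDerivAt_iff_isLittleO.mp hd).bound (show 0 < -d.re / 2 by linarith)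
  filter_upwards [nhdsWithin_le_nhds hlin, self_mem_nhdsWithin] with z hz hza
  have hpos : 0 < ‖z - a‖ := norm_pos_iff.mpr (sub_ne_zero.mpr hza)
  calc ⟪z - a, F z⟫_ℝ = ‖z - a‖ ^ 2 * d.re + ⟪z - a, F z - (z - a) * d⟫_ℝ := by
        rw [← Complex.real_inner_self_mul_s19, ← inner_add_right, add_sub_cancel]
    _ ≤ ‖z - a‖ ^ 2 * d.re + ‖z - a‖ * (-d.re / 2 * ‖z - a‖) := by
        gcongr
        exact (real_inner_le_norm _ _).trans (mul_le_mul_of_nonneg_left hz (norm_nonneg _))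
    _ = ‖z - a‖ ^ 2 * (d.re / 2) := by ring
    _ < 0 := mul_neg_of_pos_of_neg (by positivity) (by linarith)

section Invariance

variable {E : Type*} [NormedAddCommGroup E] [InnerProductSpace ℝ E] {F : E → E} {a : E}
  {γ : ℝ → E}

theorem mem_closedBall_of_inner_sub_apply_neg_on_sphere {ε t₀ : ℝ}
    (hF : ∀ z ∈ sphere a ε, ⟪z - a, F z⟫_ℝ < 0)
    (hγ : ∀ t ∈ Ici t₀, HasDerivWithinAt γ (F (γ t)) (Ici t₀) t)
    (h₀ : γ t₀ ∈ closedBall a ε) {t : ℝ} (ht : t ∈ Ici t₀) : γ t ∈ closedBall a ε := by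
  have hε : 0 ≤ ε := dist_nonneg.trans h₀
  rw [mem_closedBall, dist_eq_norm] at h₀ ⊢
  suffices ‖γ t - a‖ ^ 2 ≤ ε ^ 2 from (sq_le_sq₀ (norm_nonneg _) hε).mp this
  refine image_le_of_deriv_right_lt_deriv_boundary (f := fun s => ‖γ s - a‖ ^ 2)
    (f' := fun s => 2 * ⟪γ s - a, F (γ s)⟫_ℝ) (B' := fun _ => 0) ?_ ?_ (by gcongr)
    (fun _ => hasDerivAt_const _ _) ?_ ⟨ht, le_rfl⟩
  · have hc : ContinuousOn γ (Ici t₀) := fun s hs => (hγ s hs).continuousWithinAt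
    exact ((hc.sub continuousOn_const).norm.pow 2).mono Icc_subset_Ici_self
  · exact fun s hs => (((hγ s hs.1).mono (Ici_subset_Ici.mpr hs.1)).sub_const a).norm_sq
  · intro s _ hs
    have hsphere : γ s ∈ sphere a ε := by
      rw [mem_sphere, dist_eq_norm]
      exact (pow_left_inj₀ (norm_nonneg _) hε two_ne_zero).mp hs
    linarith [hF _ hsphere]

theorem tendsto_atTop_of_mapClusterPt_of_inner_sub_apply_neg {T : ℝ}
    (hF : ∀ᶠ z in 𝓝[≠] a, ⟪z - a, F z⟫_ℝ < 0)
    (hγ : ∀ t ∈ Ici T, HasDerivWithinAt γ (F (γ t)) (Ici T) t)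
    (ha : MapClusterPt a atTop γ) : Tendsto γ atTop (𝓝 a) := by
  obtain ⟨r, hr, hFr⟩ := nhds_basis_closedBall.eventually_iff.mp (eventually_nhdsWithin_iff.mp hF)
  rw [nhds_basis_closedBall.tendsto_right_iff]
  intro ε hε
  set δ := min ε r
  have hδ : 0 < δ := lt_min hε hr
  obtain ⟨t₀, hγt₀, hTt₀⟩ :=
    ((ha.frequently (closedBall_mem_nhds a hδ)).and_eventually (eventually_ge_atTop T)).exists
  have hsphere : ∀ z ∈ sphere a δ, ⟪z - a, F z⟫_ℝ < 0 := fun z hz =>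
    hFr (sphere_subset_closedBall.trans (closedBall_subset_closedBall (min_le_right _ _)) hz)
      (ne_of_mem_sphere hz hδ.ne')
  filter_upwards [eventually_ge_atTop t₀] with t ht
  exact closedBall_subset_closedBall (min_le_left _ _) <|
    mem_closedBall_of_inner_sub_apply_neg_on_sphere hsphere
      (fun s hs => (hγ s (hTt₀.trans hs)).mono (Ici_subset_Ici.mpr hTt₀)) hγt₀ ht

end Invariance

theorem IsSolOn.comp_neg {F : ℂ → ℂ} {Ω : Set ℂ} {s : Set ℝ} {γ : ℝ → ℂ}
    (hγ : IsSolOn F Ω s γ) : IsSolOn (fun z => -F z) Ω (-s) (fun t => γ (-t)) := by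
  intro t ht
  obtain ⟨hmem, hder⟩ := hγ (-t) ht
  refine ⟨hmem, ?_⟩
  simpa [Function.comp_def] using hder.scomp t (hasDerivWithinAt_neg t (-s)) (fun _ h => h)

theorem IsSolOn.tendsto_atTop_of_mapClusterPt {F : ℂ → ℂ} {Ω : Set ℂ} {γ : ℝ → ℂ} {a d : ℂ}
    (hγ : IsSolOn F Ω (Ici 0) γ) (hFa : F a = 0) (hd : HasDerivAt F d a) (hre : d.re < 0)
    (ha : MapClusterPt a atTop γ) : Tendsto γ atTop (𝓝 a) :=
  tendsto_atTop_of_mapClusterPt_of_inner_sub_apply_neg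
    (eventually_inner_sub_apply_neg_of_hasDerivAt hd hFa hre) (fun t ht => (hγ t ht).2) ha

theorem IsSolOn.tendsto_atBot_of_mapClusterPt {F : ℂ → ℂ} {Ω : Set ℂ} {γ : ℝ → ℂ} {a d : ℂ}
    (hγ : IsSolOn F Ω (Iic 0) γ) (hFa : F a = 0) (hd : HasDerivAt F d a) (hre : 0 < d.re)
    (ha : MapClusterPt a atBot γ) : Tendsto γ atBot (𝓝 a) := by
  have hrev : IsSolOn (fun z => -F z) Ω (Ici 0) (fun t => γ (-t)) := by simpa using hγ.comp_neg
  have ha' : MapClusterPt a atTop (fun t => γ (-t)) :=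
    .of_comp tendsto_neg_atBot_atTop (by simpa [Function.comp_def] using ha)
  simpa [Function.comp_def] using
    (hrev.tendsto_atTop_of_mapClusterPt (by simp [hFa]) hd.neg (by simpa using hre) ha').comp
      tendsto_neg_atBot_atTop

theorem setOf_tendsto_comp_eq_singleton {α X : Type*} [TopologicalSpace X] [T2Space X]
    {l : Filter α} {s : Set α} {γ : α → X} {a : X} (hγ : Tendsto γ l (𝓝 a))
    (ha : ∃ u : ℕ → α, (∀ k, u k ∈ s) ∧ Tendsto u atTop l ∧
      Tendsto (fun k => γ (u k)) atTop (𝓝 a)) :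
    { v | ∃ u : ℕ → α, (∀ k, u k ∈ s) ∧ Tendsto u atTop l ∧
      Tendsto (fun k => γ (u k)) atTop (𝓝 v) } = {a} := by
  refine Set.eq_singleton_iff_unique_mem.mpr ⟨ha, ?_⟩
  rintro v ⟨u, -, hu, hγu⟩
  exact tendsto_nhds_unique hγu (hγ.comp hu)

theorem stmt_19_general (Ω : Set ℂ) (hΩ : IsOpen Ω)
    (F : ℂ → ℂ) (hF : DifferentiableOn ℂ F Ω) :
    (∀ a ∈ Ω, F a = 0 → (deriv F a).re < 0 →
      ∀ γ : ℝ → ℂ, IsSolOn F Ω (Ici 0) γ →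
        (∃ u : ℕ → ℝ, (∀ k, u k ∈ Ici (0 : ℝ)) ∧ Tendsto u atTop atTop ∧
          Tendsto (fun k => γ (u k)) atTop (nhds a)) →
        Tendsto γ atTop (nhds a) ∧
        { v : ℂ | ∃ u : ℕ → ℝ, (∀ k, u k ∈ Ici (0 : ℝ)) ∧ Tendsto u atTop atTop ∧
            Tendsto (fun k => γ (u k)) atTop (nhds v) } = {a}) ∧
    (∀ a ∈ Ω, F a = 0 → 0 < (deriv F a).re →
      ∀ γ : ℝ → ℂ, IsSolOn F Ω (Iic 0) γ →
        (∃ u : ℕ → ℝ, (∀ k, u k ∈ Iic (0 : ℝ)) ∧ Tendsto u atTop atBot ∧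
          Tendsto (fun k => γ (u k)) atTop (nhds a)) →
        Tendsto γ atBot (nhds a) ∧
        { v : ℂ | ∃ u : ℕ → ℝ, (∀ k, u k ∈ Iic (0 : ℝ)) ∧ Tendsto u atTop atBot ∧
            Tendsto (fun k => γ (u k)) atTop (nhds v) } = {a}) := by
  have hd : ∀ a ∈ Ω, HasDerivAt F (deriv F a) a := fun a ha =>
    (hF.differentiableAt (hΩ.mem_nhds ha)).hasDerivAt
  refine ⟨fun a ha hFa hre γ hγ hu => ?_, fun a ha hFa hre γ hγ hu => ?_⟩
  · have ⟨u, _, hu_top, hγu⟩ := hu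
    have hlim := hγ.tendsto_atTop_of_mapClusterPt hFa (hd a ha) hre
      (hγu.mapClusterPt.of_comp hu_top)
    exact ⟨hlim, setOf_tendsto_comp_eq_singleton hlim hu⟩
  · have ⟨u, _, hu_bot, hγu⟩ := hu
    have hlim := hγ.tendsto_atBot_of_mapClusterPt hFa (hd a ha) hre
      (hγu.mapClusterPt.of_comp hu_bot)
    exact ⟨hlim, setOf_tendsto_comp_eq_singleton hlim hu⟩

/-- for a holomorphic flow, if an equilibrium `a` with `Re F'(a) < 0` lies in
the positive limit set of a forward solution `γ`, then `γ(t) → a` as `t → ∞` and the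
positive limit set of `γ` is exactly `{a}`; analogously, if `Re F'(a) > 0` and `a` lies in
the negative limit set of a backward solution, then `γ(t) → a` as `t → −∞` and the negative
limit set is `{a}`. -/
theorem stmt_19 (Ω : Set ℂ) (hΩ : IsOpen Ω) (hconn : IsConnected Ω)
    (F : ℂ → ℂ) (hF : DifferentiableOn ℂ F Ω) (hF0 : ∃ z ∈ Ω, F z ≠ 0) :
    (∀ a ∈ Ω, F a = 0 → (deriv F a).re < 0 →
      ∀ γ : ℝ → ℂ, IsSolOn F Ω (Ici 0) γ →
        (∃ u : ℕ → ℝ, (∀ k, u k ∈ Ici (0 : ℝ)) ∧ Tendsto u atTop atTop ∧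
          Tendsto (fun k => γ (u k)) atTop (nhds a)) →
        Tendsto γ atTop (nhds a) ∧
        { v : ℂ | ∃ u : ℕ → ℝ, (∀ k, u k ∈ Ici (0 : ℝ)) ∧ Tendsto u atTop atTop ∧
            Tendsto (fun k => γ (u k)) atTop (nhds v) } = {a}) ∧
    (∀ a ∈ Ω, F a = 0 → 0 < (deriv F a).re →
      ∀ γ : ℝ → ℂ, IsSolOn F Ω (Iic 0) γ →
        (∃ u : ℕ → ℝ, (∀ k, u k ∈ Iic (0 : ℝ)) ∧ Tendsto u atTop atBot ∧
          Tendsto (fun k => γ (u k)) atTop (nhds a)) →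
        Tendsto γ atBot (nhds a) ∧
        { v : ℂ | ∃ u : ℕ → ℝ, (∀ k, u k ∈ Iic (0 : ℝ)) ∧ Tendsto u atTop atBot ∧
            Tendsto (fun k => γ (u k)) atTop (nhds v) } = {a}) :=
  stmt_19_general Ω hΩ F hF
end
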